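/- arXiv:2203.10911 — 4 statements merged into one kernel-verified Lean document; each statement's English description precedes it below -/
import Mathlib

section
/- Let N ≥ 1, 0 < α < N, σ > N − α with σ < N, and 1 ≤ λ ≤ 2. Then there is a constant C = C(N, α, σ) > 0, independent of λ, such that for all x ∈ ℝ^N with |x| ≥ 1, ∫_{ℝ^N} |x−y|^{-α} (λ + |y|²)^{-σ/2} dy ≤ C (λ + |x|²)^{(N−α−σ)/2}. -/
open MeasureTheory Set Metric
open scoped ENNReal

namespace Stmt4Aux

noncomputable abbrev Eu (N : ℕ) := EuclideanSpace ℝ (Fin N)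

instance (N : ℕ) [NeZero N] : Nontrivial (Eu N) := by
  haveI : Nonempty (Fin N) := ⟨⟨0, Nat.pos_of_ne_zero (NeZero.ne N)⟩⟩
  infer_instance

lemma ann (N : ℕ) (s p q : ℝ) (hs : 0 ≤ s) :
    ∫⁻ z in {z : Eu N | 2 ^ p ≤ ‖z‖ ∧ ‖z‖ ≤ 2 ^ q},
        ENNReal.ofReal (‖z‖ ^ (-s)) ∂volume
      ≤ ENNReal.ofReal (2 ^ (p * -s + q * N)) *
          volume (closedBall (0 : Eu N) 1) := by
  have h2p : (0:ℝ) < 2 ^ p := Real.rpow_pos_of_pos two_pos p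
  have h2q : (0:ℝ) ≤ 2 ^ q := (Real.rpow_pos_of_pos two_pos q).le
  calc ∫⁻ z in {z : Eu N | 2 ^ p ≤ ‖z‖ ∧ ‖z‖ ≤ 2 ^ q},
        ENNReal.ofReal (‖z‖ ^ (-s)) ∂volume
      ≤ ∫⁻ _ in {z : Eu N | 2 ^ p ≤ ‖z‖ ∧ ‖z‖ ≤ 2 ^ q},
          ENNReal.ofReal ((2:ℝ) ^ (p * -s)) ∂volume := by
        refine setLIntegral_mono measurable_const fun z hz => ?_
        refine ENNReal.ofReal_le_ofReal ?_
        have := Real.rpow_le_rpow_of_nonpos h2p hz.1 (neg_nonpos.mpr hs)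
        rwa [← Real.rpow_mul two_pos.le] at this
    _ = ENNReal.ofReal ((2:ℝ) ^ (p * -s)) *
          volume {z : Eu N | 2 ^ p ≤ ‖z‖ ∧ ‖z‖ ≤ 2 ^ q} := setLIntegral_const _ _
    _ ≤ ENNReal.ofReal ((2:ℝ) ^ (p * -s)) * volume (closedBall (0 : Eu N) (2 ^ q)) := by
        gcongr
        intro z hz
        simpa [mem_closedBall_zero_iff] using hz.2
    _ = ENNReal.ofReal (2 ^ (p * -s + q * N)) * volume (closedBall (0 : Eu N) 1) := by
        rw [Measure.addHaar_closedBall' _ _ h2q, ← mul_assoc, ← ENNReal.ofReal_mul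
          (Real.rpow_nonneg two_pos.le _)]
        congr 2
        rw [finrank_euclideanSpace_fin, ← Real.rpow_natCast ((2:ℝ) ^ q) N,
          ← Real.rpow_mul two_pos.le, ← Real.rpow_add two_pos]

lemma geom_sum_lt_top (c r : ℝ) (hr : r < 0) (K : ℝ≥0∞) (hK : K < ⊤) :
    (∑' k : ℕ, ENNReal.ofReal ((2:ℝ) ^ (c + r * k)) * K) < ⊤ := by
  have h1 : ∀ k : ℕ, ENNReal.ofReal ((2:ℝ) ^ (c + r * k)) * K
      = ENNReal.ofReal ((2:ℝ) ^ r) ^ k * (ENNReal.ofReal ((2:ℝ) ^ c) * K) := by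
    intro k
    have h2 : (2:ℝ) ^ (c + r * k) = ((2:ℝ) ^ r) ^ k * 2 ^ c := by
      rw [← Real.rpow_natCast ((2:ℝ) ^ r) k, ← Real.rpow_mul two_pos.le,
        ← Real.rpow_add two_pos]
      ring_nf
    rw [h2, ENNReal.ofReal_mul (by positivity), ENNReal.ofReal_pow (by positivity)]
    ring
  simp_rw [h1]
  rw [ENNReal.tsum_mul_right, ENNReal.tsum_geometric]
  refine ENNReal.mul_lt_top ?_ (ENNReal.mul_lt_top ENNReal.ofReal_lt_top hK)
  rw [ENNReal.inv_lt_top]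
  have : ENNReal.ofReal ((2:ℝ) ^ r) < 1 := by
    rw [← ENNReal.ofReal_one]
    exact ENNReal.ofReal_lt_ofReal_iff_of_nonneg (Real.rpow_nonneg two_pos.le r) |>.mpr
      (Real.rpow_lt_one_of_one_lt_of_neg one_lt_two hr)
  exact tsub_pos_of_lt this

lemma F1 (N : ℕ) [NeZero N] (s : ℝ) (hs0 : 0 ≤ s) (hsN : s < N) :
    ∫⁻ z in ball (0 : Eu N) 1, ENNReal.ofReal (‖z‖ ^ (-s)) ∂volume < ⊤ := by
  classical
  set S : ℕ → Set (Eu N) := fun k =>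
    {z : Eu N | 2 ^ (-(k:ℝ) - 1) ≤ ‖z‖ ∧ ‖z‖ ≤ 2 ^ (-(k:ℝ))} with hS
  have hcover : ball (0 : Eu N) 1 ⊆ {(0 : Eu N)} ∪ ⋃ k, S k := by
    intro z hz
    by_cases hz0 : z = 0
    · exact Or.inl hz0
    · refine Or.inr ?_
      have ht0 : 0 < ‖z‖ := norm_pos_iff.mpr hz0
      have ht1 : ‖z‖ < 1 := mem_ball_zero_iff.mp hz
      have hex : ∃ n : ℕ, (2:ℝ) ^ (-(n:ℝ)) < ‖z‖ := by
        obtain ⟨n, hn⟩ := pow_unbounded_of_one_lt (‖z‖⁻¹) (one_lt_two (α := ℝ))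
        refine ⟨n, ?_⟩
        rw [Real.rpow_neg two_pos.le, Real.rpow_natCast]
        exact inv_lt_of_inv_lt₀ ht0 hn
      have h0 : ¬ ((2:ℝ) ^ (-((0:ℕ):ℝ)) < ‖z‖) := by
        simp only [Nat.cast_zero, neg_zero, Real.rpow_zero, not_lt]
        exact ht1.le
      have hne : Nat.find hex ≠ 0 := by
        intro h
        have hs2 := Nat.find_spec hex
        rw [h] at hs2
        exact h0 hs2
      obtain ⟨k, hk⟩ : ∃ k, Nat.find hex = k + 1 :=
        ⟨Nat.find hex - 1, by omega⟩
      refine mem_iUnion.mpr ⟨k, ?_, ?_⟩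
      · have he : -(k:ℝ) - 1 = -((Nat.find hex : ℕ):ℝ) := by rw [hk]; push_cast; ring
        rw [he]
        exact (Nat.find_spec hex).le
      · have hmin := Nat.find_min hex (m := k) (by omega)
        rw [not_lt] at hmin
        exact hmin
  calc ∫⁻ z in ball (0 : Eu N) 1, ENNReal.ofReal (‖z‖ ^ (-s)) ∂volume
      ≤ ∫⁻ z in {(0 : Eu N)} ∪ ⋃ k, S k, ENNReal.ofReal (‖z‖ ^ (-s)) ∂volume :=
        lintegral_mono_set hcover
    _ ≤ (∫⁻ z in {(0 : Eu N)}, ENNReal.ofReal (‖z‖ ^ (-s)) ∂volume)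
        + ∫⁻ z in ⋃ k, S k, ENNReal.ofReal (‖z‖ ^ (-s)) ∂volume := lintegral_union_le _ _ _
    _ ≤ 0 + ∑' k, ∫⁻ z in S k, ENNReal.ofReal (‖z‖ ^ (-s)) ∂volume := by
        gcongr
        · exact le_of_eq (setLIntegral_measure_zero _ _ (measure_singleton _))
        · exact lintegral_iUnion_le _ _
    _ ≤ 0 + ∑' k : ℕ, ENNReal.ofReal ((2:ℝ) ^ (s + (s - N) * k)) *
          volume (closedBall (0 : Eu N) 1) := by
        gcongr with k
        have h := ann N s (-(k:ℝ) - 1) (-(k:ℝ)) hs0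
        have he : (-(k:ℝ) - 1) * -s + (-(k:ℝ)) * N = s + (s - N) * k := by ring
        rwa [he] at h
    _ < ⊤ := by
        rw [zero_add]
        exact geom_sum_lt_top s (s - N) (by linarith) _ measure_closedBall_lt_top

lemma F2 (N : ℕ) (s : ℝ) (hsN : (N:ℝ) < s) :
    ∫⁻ z in (ball (0 : Eu N) 2)ᶜ, ENNReal.ofReal (‖z‖ ^ (-s)) ∂volume < ⊤ := by
  classical
  have hs0 : 0 ≤ s := le_trans (Nat.cast_nonneg N) hsN.le
  set S : ℕ → Set (Eu N) := fun k =>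
    {z : Eu N | 2 ^ ((k:ℝ) + 1) ≤ ‖z‖ ∧ ‖z‖ ≤ 2 ^ ((k:ℝ) + 2)} with hS
  have hcover : (ball (0 : Eu N) 2)ᶜ ⊆ ⋃ k, S k := by
    intro z hz
    have ht2 : (2:ℝ) ≤ ‖z‖ := by
      simpa [mem_ball_zero_iff, not_lt] using hz
    have hex : ∃ n : ℕ, ‖z‖ < (2:ℝ) ^ ((n:ℝ)) := by
      obtain ⟨n, hn⟩ := pow_unbounded_of_one_lt ‖z‖ (one_lt_two (α := ℝ))
      exact ⟨n, by rwa [Real.rpow_natCast]⟩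
    have h0 : ¬ (‖z‖ < (2:ℝ) ^ (((0:ℕ):ℝ))) := by
      simp only [Nat.cast_zero, Real.rpow_zero, not_lt]
      linarith
    have h1 : ¬ (‖z‖ < (2:ℝ) ^ (((1:ℕ):ℝ))) := by
      simp only [Nat.cast_one, Real.rpow_one, not_lt]
      exact ht2
    have hne0 : Nat.find hex ≠ 0 := by
      intro h
      have hs2 := Nat.find_spec hex
      rw [h] at hs2
      exact h0 hs2
    have hne1 : Nat.find hex ≠ 1 := by
      intro h
      have hs2 := Nat.find_spec hex
      rw [h] at hs2
      exact h1 hs2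
    obtain ⟨k, hk⟩ : ∃ k, Nat.find hex = k + 2 := ⟨Nat.find hex - 2, by omega⟩
    refine mem_iUnion.mpr ⟨k, ?_, ?_⟩
    · have hmin := Nat.find_min hex (m := k + 1) (by omega)
      rw [not_lt] at hmin
      have he : ((k:ℝ) + 1) = ((k + 1 : ℕ) : ℝ) := by push_cast; ring
      rw [he]
      exact hmin
    · have he : ((k:ℝ) + 2) = ((Nat.find hex : ℕ) : ℝ) := by rw [hk]; push_cast; ring
      rw [he]
      exact (Nat.find_spec hex).le
  calc ∫⁻ z in (ball (0 : Eu N) 2)ᶜ, ENNReal.ofReal (‖z‖ ^ (-s)) ∂volume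
      ≤ ∫⁻ z in ⋃ k, S k, ENNReal.ofReal (‖z‖ ^ (-s)) ∂volume := lintegral_mono_set hcover
    _ ≤ ∑' k, ∫⁻ z in S k, ENNReal.ofReal (‖z‖ ^ (-s)) ∂volume := lintegral_iUnion_le _ _
    _ ≤ ∑' k : ℕ, ENNReal.ofReal ((2:ℝ) ^ ((2 * N - s) + (N - s) * k)) *
          volume (closedBall (0 : Eu N) 1) := by
        gcongr with k
        have h := ann N s ((k:ℝ) + 1) ((k:ℝ) + 2) hs0
        have he : ((k:ℝ) + 1) * -s + ((k:ℝ) + 2) * N = (2 * N - s) + (N - s) * k := by ring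
        rwa [he] at h
    _ < ⊤ := geom_sum_lt_top _ _ (by linarith) _ measure_closedBall_lt_top


lemma measR (t : ℝ) : Measurable fun x : ℝ => x ^ t := by measurability

lemma meas1 (N : ℕ) (u : Eu N) (t : ℝ) : Measurable fun z : Eu N => ‖u - z‖ ^ t :=
  (measR t).comp ((measurable_const.sub measurable_id).norm)

lemma meas0 (N : ℕ) (t : ℝ) : Measurable fun z : Eu N => ‖z‖ ^ t :=
  (measR t).comp measurable_norm

lemma inv_half_rpow (σ : ℝ) : ((2:ℝ)⁻¹) ^ (-σ) = 2 ^ σ := by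
  rw [Real.inv_rpow two_pos.le, Real.rpow_neg two_pos.le, inv_inv]



lemma unit_bound (N : ℕ) [NeZero N] (α σ : ℝ) (hα0 : 0 < α) (hαN : α < N)
    (hσ0 : 0 < σ) (hσN : σ < N) (hασ : (N:ℝ) < α + σ) :
    ∃ M : ℝ≥0∞, M < ⊤ ∧ ∀ u : Eu N, ‖u‖ = 1 →
      ∫⁻ z : Eu N, ENNReal.ofReal (‖u - z‖ ^ (-α) * ‖z‖ ^ (-σ)) ∂volume ≤ M := by
  set A := ∫⁻ z in ball (0 : Eu N) 1, ENNReal.ofReal (‖z‖ ^ (-α)) ∂volume with hA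
  set B := ∫⁻ z in ball (0 : Eu N) 1, ENNReal.ofReal (‖z‖ ^ (-σ)) ∂volume with hB
  set T := ∫⁻ z in (ball (0 : Eu N) 2)ᶜ, ENNReal.ofReal (‖z‖ ^ (-(α + σ))) ∂volume with hT
  refine ⟨ENNReal.ofReal ((2:ℝ) ^ σ) * A + (ENNReal.ofReal ((2:ℝ) ^ α) * B
    + (ENNReal.ofReal ((2:ℝ) ^ α * (2:ℝ) ^ σ) * volume (closedBall (0 : Eu N) 2)
      + ENNReal.ofReal ((2:ℝ) ^ α) * T)), ?_, ?_⟩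
  · have hAfin := F1 N α hα0.le hαN
    have hBfin := F1 N σ hσ0.le hσN
    have hTfin := F2 N (α + σ) hασ
    have hball : volume (closedBall (0 : Eu N) 2) < ⊤ := measure_closedBall_lt_top
    refine ENNReal.add_lt_top.mpr ⟨ENNReal.mul_lt_top ENNReal.ofReal_lt_top hAfin,
      ENNReal.add_lt_top.mpr ⟨ENNReal.mul_lt_top ENNReal.ofReal_lt_top hBfin,
      ENNReal.add_lt_top.mpr ⟨ENNReal.mul_lt_top ENNReal.ofReal_lt_top hball,
      ENNReal.mul_lt_top ENNReal.ofReal_lt_top hTfin⟩⟩⟩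
  intro u hu
  set S1 : Set (Eu N) := ball u 2⁻¹ with hS1
  set S2 : Set (Eu N) := ball (0 : Eu N) 2⁻¹ with hS2
  set S3 : Set (Eu N) := closedBall (0 : Eu N) 2 ∩ S1ᶜ ∩ S2ᶜ with hS3
  set S4 : Set (Eu N) := (closedBall (0 : Eu N) 2)ᶜ with hS4
  have hcover : (univ : Set (Eu N)) ⊆ S1 ∪ (S2 ∪ (S3 ∪ S4)) := by
    intro z _
    by_cases h1 : z ∈ S1
    · exact Or.inl h1
    by_cases h2 : z ∈ S2
    · exact Or.inr (Or.inl h2)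
    by_cases h4 : z ∈ closedBall (0 : Eu N) 2
    · exact Or.inr (Or.inr (Or.inl ⟨⟨h4, h1⟩, h2⟩))
    · exact Or.inr (Or.inr (Or.inr h4))
  have key1 : ∫⁻ z in S1, ENNReal.ofReal (‖u - z‖ ^ (-α) * ‖z‖ ^ (-σ)) ∂volume
      ≤ ENNReal.ofReal ((2:ℝ) ^ σ) * A := by
    have step1 : ∫⁻ z in S1, ENNReal.ofReal (‖u - z‖ ^ (-α) * ‖z‖ ^ (-σ)) ∂volume
        ≤ ∫⁻ z in S1, ENNReal.ofReal ((2:ℝ) ^ σ) * ENNReal.ofReal (‖u - z‖ ^ (-α)) ∂volume := by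
      refine setLIntegral_mono (measurable_const.mul (meas1 N u (-α)).ennreal_ofReal)
        fun z hz => ?_
      rw [← ENNReal.ofReal_mul (Real.rpow_nonneg two_pos.le σ)]
      refine ENNReal.ofReal_le_ofReal ?_
      have hz2 : (2:ℝ)⁻¹ ≤ ‖z‖ := by
        have h3 : ‖u - z‖ < 2⁻¹ := by
          have := mem_ball.mp hz
          rwa [dist_eq_norm, norm_sub_rev] at this
        have h4 : ‖u‖ - ‖z‖ ≤ ‖u - z‖ := norm_sub_norm_le u z
        rw [hu] at h4
        linarith
      have h5 : ‖z‖ ^ (-σ) ≤ (2:ℝ) ^ σ := by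
        have := Real.rpow_le_rpow_of_nonpos (by norm_num) hz2 (neg_nonpos.mpr hσ0.le)
        rwa [inv_half_rpow σ] at this
      calc ‖u - z‖ ^ (-α) * ‖z‖ ^ (-σ) ≤ ‖u - z‖ ^ (-α) * (2:ℝ) ^ σ := by
            exact mul_le_mul_of_nonneg_left h5 (Real.rpow_nonneg (norm_nonneg _) _)
        _ = (2:ℝ) ^ σ * ‖u - z‖ ^ (-α) := mul_comm _ _
    have step2 : ∫⁻ z in S1, ENNReal.ofReal (‖u - z‖ ^ (-α)) ∂volume ≤ A := by
      have hmp := (Measure.measurePreserving_sub_left (volume : Measure (Eu N)) u)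
      have htr := hmp.setLIntegral_comp_preimage (measurableSet_ball (x := u) (ε := 2⁻¹))
        (f := fun z => ENNReal.ofReal (‖u - z‖ ^ (-α))) (meas1 N u (-α)).ennreal_ofReal
      have hpre : (fun w => u - w) ⁻¹' ball u 2⁻¹ = ball (0 : Eu N) 2⁻¹ := by
        ext w
        simp only [mem_preimage, mem_ball, dist_eq_norm, sub_sub_cancel_left, norm_neg,
          sub_zero]
      rw [hpre] at htr
      have hfun : ∀ w : Eu N, ENNReal.ofReal (‖u - (u - w)‖ ^ (-α))
          = ENNReal.ofReal (‖w‖ ^ (-α)) := by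
        intro w; rw [sub_sub_cancel]
      calc ∫⁻ z in S1, ENNReal.ofReal (‖u - z‖ ^ (-α)) ∂volume
          = ∫⁻ w in ball (0 : Eu N) 2⁻¹, ENNReal.ofReal (‖u - (u - w)‖ ^ (-α)) ∂volume :=
            htr.symm
        _ = ∫⁻ w in ball (0 : Eu N) 2⁻¹, ENNReal.ofReal (‖w‖ ^ (-α)) ∂volume := by
            simp_rw [hfun]
        _ ≤ A := lintegral_mono_set (ball_subset_ball (by norm_num))
    calc ∫⁻ z in S1, ENNReal.ofReal (‖u - z‖ ^ (-α) * ‖z‖ ^ (-σ)) ∂volume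
        ≤ ∫⁻ z in S1, ENNReal.ofReal ((2:ℝ) ^ σ) * ENNReal.ofReal (‖u - z‖ ^ (-α)) ∂volume :=
          step1
      _ = ENNReal.ofReal ((2:ℝ) ^ σ) * ∫⁻ z in S1, ENNReal.ofReal (‖u - z‖ ^ (-α)) ∂volume :=
          lintegral_const_mul' _ _ ENNReal.ofReal_ne_top
      _ ≤ ENNReal.ofReal ((2:ℝ) ^ σ) * A := by gcongr
  have key2 : ∫⁻ z in S2, ENNReal.ofReal (‖u - z‖ ^ (-α) * ‖z‖ ^ (-σ)) ∂volume
      ≤ ENNReal.ofReal ((2:ℝ) ^ α) * B := by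
    have step1 : ∫⁻ z in S2, ENNReal.ofReal (‖u - z‖ ^ (-α) * ‖z‖ ^ (-σ)) ∂volume
        ≤ ∫⁻ z in S2, ENNReal.ofReal ((2:ℝ) ^ α) * ENNReal.ofReal (‖z‖ ^ (-σ)) ∂volume := by
      refine setLIntegral_mono (measurable_const.mul (meas0 N (-σ)).ennreal_ofReal)
        fun z hz => ?_
      rw [← ENNReal.ofReal_mul (Real.rpow_nonneg two_pos.le α)]
      refine ENNReal.ofReal_le_ofReal ?_
      have hz2 : (2:ℝ)⁻¹ ≤ ‖u - z‖ := by
        have h3 : ‖z‖ < 2⁻¹ := mem_ball_zero_iff.mp hz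
        have h4 : ‖u‖ - ‖z‖ ≤ ‖u - z‖ := norm_sub_norm_le u z
        rw [hu] at h4
        linarith
      have h5 : ‖u - z‖ ^ (-α) ≤ (2:ℝ) ^ α := by
        have := Real.rpow_le_rpow_of_nonpos (by norm_num) hz2 (neg_nonpos.mpr hα0.le)
        rwa [inv_half_rpow α] at this
      exact mul_le_mul_of_nonneg_right h5 (Real.rpow_nonneg (norm_nonneg _) _)
    calc ∫⁻ z in S2, ENNReal.ofReal (‖u - z‖ ^ (-α) * ‖z‖ ^ (-σ)) ∂volume
        ≤ ∫⁻ z in S2, ENNReal.ofReal ((2:ℝ) ^ α) * ENNReal.ofReal (‖z‖ ^ (-σ)) ∂volume := step1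
      _ = ENNReal.ofReal ((2:ℝ) ^ α) * ∫⁻ z in S2, ENNReal.ofReal (‖z‖ ^ (-σ)) ∂volume :=
          lintegral_const_mul' _ _ ENNReal.ofReal_ne_top
      _ ≤ ENNReal.ofReal ((2:ℝ) ^ α) * B := by
          gcongr
          exact lintegral_mono_set (ball_subset_ball (by norm_num))
  have key3 : ∫⁻ z in S3, ENNReal.ofReal (‖u - z‖ ^ (-α) * ‖z‖ ^ (-σ)) ∂volume
      ≤ ENNReal.ofReal ((2:ℝ) ^ α * (2:ℝ) ^ σ) * volume (closedBall (0 : Eu N) 2) := by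
    have step1 : ∫⁻ z in S3, ENNReal.ofReal (‖u - z‖ ^ (-α) * ‖z‖ ^ (-σ)) ∂volume
        ≤ ∫⁻ _ in S3, ENNReal.ofReal ((2:ℝ) ^ α * (2:ℝ) ^ σ) ∂volume := by
      refine setLIntegral_mono measurable_const fun z hz => ?_
      refine ENNReal.ofReal_le_ofReal ?_
      obtain ⟨⟨_, hz1⟩, hz2⟩ := hz
      have h1 : (2:ℝ)⁻¹ ≤ ‖u - z‖ := by
        have := mem_ball.not.mp hz1
        rw [not_lt, dist_eq_norm, norm_sub_rev] at this
        exact this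
      have h2 : (2:ℝ)⁻¹ ≤ ‖z‖ := by
        have := mem_ball_zero_iff.not.mp hz2
        rw [not_lt] at this
        exact this
      have h3 : ‖u - z‖ ^ (-α) ≤ (2:ℝ) ^ α := by
        have := Real.rpow_le_rpow_of_nonpos (by norm_num) h1 (neg_nonpos.mpr hα0.le)
        rwa [inv_half_rpow α] at this
      have h4 : ‖z‖ ^ (-σ) ≤ (2:ℝ) ^ σ := by
        have := Real.rpow_le_rpow_of_nonpos (by norm_num) h2 (neg_nonpos.mpr hσ0.le)
        rwa [inv_half_rpow σ] at this
      exact mul_le_mul h3 h4 (Real.rpow_nonneg (norm_nonneg _) _)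
        (Real.rpow_nonneg two_pos.le _)
    calc ∫⁻ z in S3, ENNReal.ofReal (‖u - z‖ ^ (-α) * ‖z‖ ^ (-σ)) ∂volume
        ≤ ∫⁻ _ in S3, ENNReal.ofReal ((2:ℝ) ^ α * (2:ℝ) ^ σ) ∂volume := step1
      _ = ENNReal.ofReal ((2:ℝ) ^ α * (2:ℝ) ^ σ) * volume S3 := setLIntegral_const _ _
      _ ≤ ENNReal.ofReal ((2:ℝ) ^ α * (2:ℝ) ^ σ) * volume (closedBall (0 : Eu N) 2) := by
          gcongr
          exact (inter_subset_left).trans inter_subset_left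
  have key4 : ∫⁻ z in S4, ENNReal.ofReal (‖u - z‖ ^ (-α) * ‖z‖ ^ (-σ)) ∂volume
      ≤ ENNReal.ofReal ((2:ℝ) ^ α) * T := by
    have step1 : ∫⁻ z in S4, ENNReal.ofReal (‖u - z‖ ^ (-α) * ‖z‖ ^ (-σ)) ∂volume
        ≤ ∫⁻ z in S4, ENNReal.ofReal ((2:ℝ) ^ α) * ENNReal.ofReal (‖z‖ ^ (-(α + σ))) ∂volume := by
      refine setLIntegral_mono (measurable_const.mul (meas0 N (-(α + σ))).ennreal_ofReal)
        fun z hz => ?_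
      rw [← ENNReal.ofReal_mul (Real.rpow_nonneg two_pos.le α)]
      refine ENNReal.ofReal_le_ofReal ?_
      have hz2 : (2:ℝ) < ‖z‖ := by
        have := mem_closedBall_zero_iff.not.mp hz
        rw [not_le] at this
        exact this
      have hzpos : (0:ℝ) < ‖z‖ := by linarith
      have h1 : ‖z‖ / 2 ≤ ‖u - z‖ := by
        have h4 : ‖z‖ - ‖u‖ ≤ ‖z‖ - ‖u - z‖ → True := fun _ => trivial
        have h5 : ‖z‖ - ‖u‖ ≤ ‖u - z‖ := by
          have := norm_sub_norm_le z u
          rwa [norm_sub_rev] at this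
        rw [hu] at h5
        linarith
      have h2 : ‖u - z‖ ^ (-α) ≤ (‖z‖ / 2) ^ (-α) :=
        Real.rpow_le_rpow_of_nonpos (by positivity) h1 (neg_nonpos.mpr hα0.le)
      have h3 : (‖z‖ / 2) ^ (-α) = (2:ℝ) ^ α * ‖z‖ ^ (-α) := by
        rw [div_eq_mul_inv, Real.mul_rpow (norm_nonneg _) (by norm_num),
          inv_half_rpow α, mul_comm]
      have h6 : ‖z‖ ^ (-α) * ‖z‖ ^ (-σ) = ‖z‖ ^ (-(α + σ)) := by
        rw [← Real.rpow_add hzpos]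
        ring_nf
      calc ‖u - z‖ ^ (-α) * ‖z‖ ^ (-σ) ≤ (2:ℝ) ^ α * ‖z‖ ^ (-α) * ‖z‖ ^ (-σ) := by
            rw [← h3]
            exact mul_le_mul_of_nonneg_right h2 (Real.rpow_nonneg (norm_nonneg _) _)
        _ = (2:ℝ) ^ α * ‖z‖ ^ (-(α + σ)) := by rw [mul_assoc, h6]
    calc ∫⁻ z in S4, ENNReal.ofReal (‖u - z‖ ^ (-α) * ‖z‖ ^ (-σ)) ∂volume
        ≤ ∫⁻ z in S4, ENNReal.ofReal ((2:ℝ) ^ α) * ENNReal.ofReal (‖z‖ ^ (-(α + σ))) ∂volume :=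
          step1
      _ = ENNReal.ofReal ((2:ℝ) ^ α) * ∫⁻ z in S4, ENNReal.ofReal (‖z‖ ^ (-(α + σ))) ∂volume :=
          lintegral_const_mul' _ _ ENNReal.ofReal_ne_top
      _ ≤ ENNReal.ofReal ((2:ℝ) ^ α) * T := by
          gcongr
          exact lintegral_mono_set (compl_subset_compl.mpr ball_subset_closedBall)
  calc ∫⁻ z : Eu N, ENNReal.ofReal (‖u - z‖ ^ (-α) * ‖z‖ ^ (-σ)) ∂volume
      = ∫⁻ z in (univ : Set (Eu N)), ENNReal.ofReal (‖u - z‖ ^ (-α) * ‖z‖ ^ (-σ)) ∂volume :=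
        (setLIntegral_univ _).symm
    _ ≤ ∫⁻ z in S1 ∪ (S2 ∪ (S3 ∪ S4)), ENNReal.ofReal (‖u - z‖ ^ (-α) * ‖z‖ ^ (-σ)) ∂volume :=
        lintegral_mono_set hcover
    _ ≤ (∫⁻ z in S1, ENNReal.ofReal (‖u - z‖ ^ (-α) * ‖z‖ ^ (-σ)) ∂volume)
        + ((∫⁻ z in S2, ENNReal.ofReal (‖u - z‖ ^ (-α) * ‖z‖ ^ (-σ)) ∂volume)
          + ((∫⁻ z in S3, ENNReal.ofReal (‖u - z‖ ^ (-α) * ‖z‖ ^ (-σ)) ∂volume)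
            + ∫⁻ z in S4, ENNReal.ofReal (‖u - z‖ ^ (-α) * ‖z‖ ^ (-σ)) ∂volume)) := by
        refine le_trans (lintegral_union_le _ _ _) ?_
        gcongr
        refine le_trans (lintegral_union_le _ _ _) ?_
        gcongr
        exact lintegral_union_le _ _ _
    _ ≤ _ := add_le_add key1 (add_le_add key2 (add_le_add key3 key4))

end Stmt4Aux
open Stmt4Aux

theorem stmt_4 (N : ℕ) (hN : 1 ≤ N) (α σ : ℝ) (hα0 : 0 < α) (hαN : α < N)
    (hσ1 : σ > N - α) (hσ2 : σ < N) :
    ∃ C > 0, ∀ lam : ℝ, 1 ≤ lam → lam ≤ 2 →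
      ∀ x : EuclideanSpace ℝ (Fin N), 1 ≤ ‖x‖ →
        ∫⁻ y : EuclideanSpace ℝ (Fin N),
            ENNReal.ofReal (‖x - y‖ ^ (-α) * (lam + ‖y‖ ^ 2) ^ (-σ / 2)) ∂volume
          ≤ ENNReal.ofReal (C * (lam + ‖x‖ ^ 2) ^ ((N - α - σ) / 2)) := by
  haveI : NeZero N := ⟨by omega⟩
  have hσ0 : 0 < σ := by
    have : (0:ℝ) < (N:ℝ) - α := by linarith
    linarith
  have hασ : (N:ℝ) < α + σ := by linarith
  obtain ⟨M, hMfin, hM⟩ := unit_bound N α σ hα0 hαN hσ0 hσ2 hασ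
  set e : ℝ := ((N:ℝ) - α - σ) / 2 with he
  have he0 : e ≤ 0 := by
    rw [he]; apply div_nonpos_of_nonpos_of_nonneg <;> linarith
  set Mt : ℝ := M.toReal + 1 with hMt
  have hMt0 : 0 < Mt := by
    have := ENNReal.toReal_nonneg (a := M); linarith
  refine ⟨3 ^ (-e) * Mt, by positivity, ?_⟩
  intro lam hlam1 hlam2 x hx
  set R := ‖x‖ with hR
  have hR0 : 0 < R := lt_of_lt_of_le one_pos hx
  -- Step 1 : remove lam
  have step1 : ∫⁻ y : Eu N, ENNReal.ofReal (‖x - y‖ ^ (-α) * (lam + ‖y‖ ^ 2) ^ (-σ / 2)) ∂volume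
      ≤ ∫⁻ y : Eu N, ENNReal.ofReal (‖x - y‖ ^ (-α) * ‖y‖ ^ (-σ)) ∂volume := by
    refine lintegral_mono_ae ?_
    have h0 : ∀ᵐ (y : Eu N) ∂volume, y ≠ 0 := by
      rw [ae_iff]
      have hset : {y : Eu N | ¬ y ≠ 0} = {0} := by ext y; simp
      rw [hset]
      exact measure_singleton 0
    filter_upwards [h0] with y hy0
    refine ENNReal.ofReal_le_ofReal ?_
    have hy : 0 < ‖y‖ := norm_pos_iff.mpr hy0
    have h1 : (lam + ‖y‖ ^ 2) ^ (-σ / 2) ≤ ((‖y‖ ^ 2 : ℝ)) ^ (-σ / 2) := by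
      refine Real.rpow_le_rpow_of_nonpos (by positivity) (by linarith) (by linarith)
    have h2 : ((‖y‖ ^ 2 : ℝ)) ^ (-σ / 2) = ‖y‖ ^ (-σ) := by
      rw [← Real.rpow_natCast ‖y‖ 2, ← Real.rpow_mul (norm_nonneg y)]
      congr 1
      push_cast
      ring
    rw [h2] at h1
    exact mul_le_mul_of_nonneg_left h1 (Real.rpow_nonneg (norm_nonneg _) _)
  -- Step 2 : scaling
  set u : Eu N := R⁻¹ • x with hu
  have hu1 : ‖u‖ = 1 := by
    rw [hu, norm_smul, Real.norm_eq_abs, abs_of_pos (inv_pos.mpr hR0), ← hR]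
    field_simp
  have hxu : x = R • u := by
    rw [hu, smul_smul, mul_inv_cancel₀ hR0.ne', one_smul]
  have hfm : Measurable (fun y : Eu N => ENNReal.ofReal (‖x - y‖ ^ (-α) * ‖y‖ ^ (-σ))) :=
    ((meas1 N x (-α)).mul (meas0 N (-σ))).ennreal_ofReal
  set I := ∫⁻ y : Eu N, ENNReal.ofReal (‖x - y‖ ^ (-α) * ‖y‖ ^ (-σ)) ∂volume with hI
  set J := ∫⁻ z : Eu N, ENNReal.ofReal (‖u - z‖ ^ (-α) * ‖z‖ ^ (-σ)) ∂volume with hJ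
  have hmap := Measure.map_addHaar_smul (volume : Measure (Eu N)) (ne_of_gt hR0)
  rw [finrank_euclideanSpace_fin] at hmap
  have h2 : ∫⁻ z : Eu N, ENNReal.ofReal (‖x - R • z‖ ^ (-α) * ‖R • z‖ ^ (-σ)) ∂volume
      = ENNReal.ofReal |((R ^ N : ℝ))⁻¹| * I := by
    rw [hI, ← lintegral_map hfm (measurable_const_smul R), hmap, lintegral_smul_measure, smul_eq_mul]
  have hpt : ∀ z : Eu N, ENNReal.ofReal (‖x - R • z‖ ^ (-α) * ‖R • z‖ ^ (-σ))
      = ENNReal.ofReal (R ^ (-α - σ)) * ENNReal.ofReal (‖u - z‖ ^ (-α) * ‖z‖ ^ (-σ)) := by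
    intro z
    have h3 : ‖x - R • z‖ = R * ‖u - z‖ := by
      rw [hxu, ← smul_sub, norm_smul, Real.norm_eq_abs, abs_of_pos hR0]
    have h4 : ‖R • z‖ = R * ‖z‖ := by
      rw [norm_smul, Real.norm_eq_abs, abs_of_pos hR0]
    rw [h3, h4, Real.mul_rpow hR0.le (norm_nonneg _), Real.mul_rpow hR0.le (norm_nonneg _),
      ← ENNReal.ofReal_mul (Real.rpow_nonneg hR0.le _)]
    congr 1
    have h5 : R ^ (-α - σ) = R ^ (-α) * R ^ (-σ) := by
      rw [show -α - σ = -α + -σ by ring, Real.rpow_add hR0]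
    rw [h5]
    ring
  have h6 : ∫⁻ z : Eu N, ENNReal.ofReal (‖x - R • z‖ ^ (-α) * ‖R • z‖ ^ (-σ)) ∂volume
      = ENNReal.ofReal (R ^ (-α - σ)) * J := by
    simp_rw [hpt]
    rw [hJ]
    exact lintegral_const_mul' _ _ ENNReal.ofReal_ne_top
  have hcancel : ENNReal.ofReal ((R : ℝ) ^ N) * ENNReal.ofReal |((R ^ N : ℝ))⁻¹| = 1 := by
    rw [abs_of_pos (by positivity), ← ENNReal.ofReal_mul (by positivity),
      mul_inv_cancel₀ (by positivity), ENNReal.ofReal_one]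
  have hIeq : I = ENNReal.ofReal ((R : ℝ) ^ N) * (ENNReal.ofReal (R ^ (-α - σ)) * J) := by
    calc I = 1 * I := (one_mul I).symm
      _ = ENNReal.ofReal ((R : ℝ) ^ N) * (ENNReal.ofReal |((R ^ N : ℝ))⁻¹| * I) := by
          rw [← mul_assoc, hcancel]
      _ = ENNReal.ofReal ((R : ℝ) ^ N) *
          ∫⁻ z : Eu N, ENNReal.ofReal (‖x - R • z‖ ^ (-α) * ‖R • z‖ ^ (-σ)) ∂volume := by
          rw [h2]
      _ = _ := by rw [h6]
  -- Step 3 : apply the unit bound and conclude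
  have hMle : M ≤ ENNReal.ofReal Mt := by
    conv_lhs => rw [← ENNReal.ofReal_toReal hMfin.ne]
    exact ENNReal.ofReal_le_ofReal (by rw [hMt]; linarith)
  have hpow : (R : ℝ) ^ N * R ^ (-α - σ) = R ^ ((N:ℝ) - α - σ) := by
    rw [← Real.rpow_natCast R N, ← Real.rpow_add hR0]
    congr 1
    ring
  have hIbound : I ≤ ENNReal.ofReal (R ^ ((N:ℝ) - α - σ) * Mt) := by
    calc I = ENNReal.ofReal ((R : ℝ) ^ N) * (ENNReal.ofReal (R ^ (-α - σ)) * J) := hIeq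
      _ ≤ ENNReal.ofReal ((R : ℝ) ^ N) * (ENNReal.ofReal (R ^ (-α - σ)) *
            ENNReal.ofReal Mt) := by
          gcongr
          exact le_trans (hM u hu1) hMle
      _ = ENNReal.ofReal (R ^ ((N:ℝ) - α - σ) * Mt) := by
          rw [← ENNReal.ofReal_mul (by positivity), ← ENNReal.ofReal_mul (by positivity),
            ← mul_assoc, hpow]
  -- Step 4 : final real-number estimate
  have hfinal : R ^ ((N:ℝ) - α - σ) * Mt ≤ (3 ^ (-e) * Mt) * (lam + R ^ 2) ^ e := by
    have hlam : lam + R ^ 2 ≤ 3 * R ^ 2 := by nlinarith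
    have h7 : (3 * R ^ 2 : ℝ) ^ e ≤ (lam + R ^ 2) ^ e :=
      Real.rpow_le_rpow_of_nonpos (by positivity) hlam he0
    have h8 : (3 * R ^ 2 : ℝ) ^ e = 3 ^ e * R ^ ((N:ℝ) - α - σ) := by
      rw [Real.mul_rpow (by norm_num) (by positivity), ← Real.rpow_natCast R 2,
        ← Real.rpow_mul hR0.le]
      congr 1
      rw [he]
      push_cast
      ring
    have h9 : (3:ℝ) ^ (-e) * 3 ^ e = 1 := by
      rw [← Real.rpow_add (by norm_num)]
      simp
    have h10 : (3 ^ (-e) * Mt) * (3 * R ^ 2 : ℝ) ^ e = R ^ ((N:ℝ) - α - σ) * Mt := by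
      rw [h8]
      linear_combination (Mt * R ^ ((N:ℝ) - α - σ)) * h9
    calc R ^ ((N:ℝ) - α - σ) * Mt = (3 ^ (-e) * Mt) * (3 * R ^ 2 : ℝ) ^ e := h10.symm
      _ ≤ (3 ^ (-e) * Mt) * (lam + R ^ 2) ^ e := by
          refine mul_le_mul_of_nonneg_left h7 (by positivity)
  calc ∫⁻ y : Eu N, ENNReal.ofReal (‖x - y‖ ^ (-α) * (lam + ‖y‖ ^ 2) ^ (-σ / 2)) ∂volume
      ≤ I := step1
    _ ≤ ENNReal.ofReal (R ^ ((N:ℝ) - α - σ) * Mt) := hIbound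
    _ ≤ ENNReal.ofReal ((3 ^ (-e) * Mt) * (lam + R ^ 2) ^ e) := ENNReal.ofReal_le_ofReal hfinal
end

section
/- Let N ≥ 1, 0 < α < N, σ > N, and 1 ≤ λ ≤ 2. Then there is a constant C = C(N, α, σ) > 0, independent of λ, such that for all x ∈ ℝ^N with |x| ≥ 1, ∫_{ℝ^N} |x−y|^{-α} (λ + |y|²)^{-σ/2} dy ≤ C (λ + |x|²)^{-α/2}. -/
open MeasureTheory Set Metric

private lemma stmt5_nontrivial (N : ℕ) (hN : 1 ≤ N) :
    Nontrivial (EuclideanSpace ℝ (Fin N)) := by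
  have : 0 < Module.finrank ℝ (EuclideanSpace ℝ (Fin N)) := by
    simp only [finrank_euclideanSpace_fin]; omega
  exact Module.nontrivial_of_finrank_pos this

private lemma stmt5_meas (N : ℕ) (α : ℝ) :
    Measurable fun z : EuclideanSpace ℝ (Fin N) => ENNReal.ofReal (‖z‖ ^ (-α)) := by
  fun_prop

/-- Finiteness of the Riesz-type integral over the unit ball. -/
private lemma stmt5_ball_finite (N : ℕ) (hN : 1 ≤ N) (α : ℝ) (hα0 : 0 < α) (hαN : α < N) :
    ∫⁻ z in ball (0 : EuclideanSpace ℝ (Fin N)) 1,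
      ENNReal.ofReal (‖z‖ ^ (-α)) ∂volume < ⊤ := by
  haveI := stmt5_nontrivial N hN
  set E := EuclideanSpace ℝ (Fin N)
  set B := volume (ball (0 : E) 1) with hBdef
  have hBfin : B < ⊤ := measure_ball_lt_top
  set S : ℕ → Set E := fun k => ball 0 ((1/2 : ℝ) ^ k) \ ball 0 ((1/2 : ℝ) ^ (k+1)) with hS
  have hcover : ball (0 : E) 1 \ {0} ⊆ ⋃ k, S k := by
    intro z hz
    obtain ⟨hz1, hz0⟩ := hz
    rw [mem_ball_zero_iff] at hz1
    have hz0' : 0 < ‖z‖ := norm_pos_iff.2 hz0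
    have hex : ∃ k : ℕ, (1/2 : ℝ) ^ (k+1) ≤ ‖z‖ := by
      obtain ⟨n, hn⟩ := exists_pow_lt_of_lt_one hz0' (by norm_num : (1/2 : ℝ) < 1)
      exact ⟨n, le_trans (pow_le_pow_of_le_one (by norm_num) (by norm_num) (Nat.le_succ n)) hn.le⟩
    have hk1 : (1/2 : ℝ) ^ (Nat.find hex + 1) ≤ ‖z‖ := Nat.find_spec hex
    have hk2 : ‖z‖ < (1/2 : ℝ) ^ (Nat.find hex) := by
      cases h : Nat.find hex with
      | zero => simpa using hz1
      | succ m =>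
        have := Nat.find_min hex (m := m) (by omega)
        push_neg at this
        exact this
    refine mem_iUnion.2 ⟨Nat.find hex, ?_⟩
    simp only [hS, mem_diff, mem_ball_zero_iff]
    exact ⟨hk2, fun h => absurd h (not_lt.2 hk1)⟩
  have hnull : (ball (0 : E) 1 \ {0} : Set E) =ᵐ[volume] ball (0 : E) 1 := by
    refine diff_ae_eq_self.2 ?_
    exact measure_mono_null inter_subset_right (measure_singleton 0)
  have key : ∀ k : ℕ, ∫⁻ z in S k, ENNReal.ofReal (‖z‖ ^ (-α)) ∂volume
      ≤ ENNReal.ofReal ((2:ℝ) ^ α) * ENNReal.ofReal ((2:ℝ) ^ (α - N)) ^ k * B := by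
    intro k
    have hmem : ∀ z ∈ S k, ENNReal.ofReal (‖z‖ ^ (-α))
        ≤ ENNReal.ofReal (((1/2 : ℝ) ^ (k+1)) ^ (-α)) := by
      intro z hz
      refine ENNReal.ofReal_le_ofReal ?_
      refine Real.rpow_le_rpow_of_nonpos (by positivity) ?_ (by linarith)
      have := hz.2
      rw [mem_ball_zero_iff, not_lt] at this
      exact this
    calc ∫⁻ z in S k, ENNReal.ofReal (‖z‖ ^ (-α)) ∂volume
        ≤ ∫⁻ _ in S k, ENNReal.ofReal (((1/2 : ℝ) ^ (k+1)) ^ (-α)) ∂volume :=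
          setLIntegral_mono' (measurableSet_ball.diff measurableSet_ball) hmem
      _ = ENNReal.ofReal (((1/2 : ℝ) ^ (k+1)) ^ (-α)) * volume (S k) := by
          rw [setLIntegral_const]
      _ ≤ ENNReal.ofReal (((1/2 : ℝ) ^ (k+1)) ^ (-α)) * volume (ball (0:E) ((1/2 : ℝ) ^ k)) := by
          gcongr
          exact diff_subset
      _ = ENNReal.ofReal (((1/2 : ℝ) ^ (k+1)) ^ (-α)) *
            (ENNReal.ofReal (((1/2 : ℝ) ^ k) ^ (Module.finrank ℝ E)) * B) := by
          rw [Measure.addHaar_ball _ _ (by positivity)]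
      _ = ENNReal.ofReal ((2:ℝ) ^ α) * ENNReal.ofReal ((2:ℝ) ^ (α - N)) ^ k * B := by
          rw [← mul_assoc, ← ENNReal.ofReal_mul (by positivity), ← ENNReal.ofReal_pow (by positivity),
            ← ENNReal.ofReal_mul (by positivity)]
          congr 2
          have h2 : ∀ m : ℕ, ((1/2 : ℝ) ^ m) = (2:ℝ) ^ (-(m:ℝ)) := by
            intro m
            rw [one_div, inv_pow, ← Real.rpow_natCast 2 m,
              ← Real.rpow_neg (by norm_num : (0:ℝ) ≤ 2)]
          have hfr : (Module.finrank ℝ E : ℝ) = (N : ℝ) := by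
            simp [E, finrank_euclideanSpace_fin]
          rw [h2 (k+1), h2 k, ← Real.rpow_natCast ((2:ℝ) ^ (-(k:ℝ))) (Module.finrank ℝ E),
            ← Real.rpow_mul (by norm_num), ← Real.rpow_mul (by norm_num),
            ← Real.rpow_natCast ((2:ℝ) ^ (α - N)) k, ← Real.rpow_mul (by norm_num),
            ← Real.rpow_add (by norm_num : (0:ℝ) < 2), ← Real.rpow_add (by norm_num : (0:ℝ) < 2)]
          congr 1
          rw [hfr]
          push_cast
          ring
  calc ∫⁻ z in ball (0 : E) 1, ENNReal.ofReal (‖z‖ ^ (-α)) ∂volume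
      = ∫⁻ z in ball (0 : E) 1 \ {0}, ENNReal.ofReal (‖z‖ ^ (-α)) ∂volume :=
        (setLIntegral_congr hnull).symm
    _ ≤ ∫⁻ z in ⋃ k, S k, ENNReal.ofReal (‖z‖ ^ (-α)) ∂volume := lintegral_mono_set hcover
    _ ≤ ∑' k, ∫⁻ z in S k, ENNReal.ofReal (‖z‖ ^ (-α)) ∂volume := lintegral_iUnion_le _ _
    _ ≤ ∑' k, ENNReal.ofReal ((2:ℝ) ^ α) * ENNReal.ofReal ((2:ℝ) ^ (α - N)) ^ k * B :=
        ENNReal.tsum_le_tsum key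
    _ < ⊤ := by
        have : ∀ k : ℕ, ENNReal.ofReal ((2:ℝ) ^ α) * ENNReal.ofReal ((2:ℝ) ^ (α - N)) ^ k * B
            = (ENNReal.ofReal ((2:ℝ) ^ α) * B) * ENNReal.ofReal ((2:ℝ) ^ (α - N)) ^ k := by
          intro k; ring
        rw [tsum_congr this, ENNReal.tsum_mul_left, ENNReal.tsum_geometric]
        refine ENNReal.mul_lt_top (ENNReal.mul_lt_top ENNReal.ofReal_lt_top hBfin) ?_
        rw [ENNReal.inv_lt_top]
        rw [tsub_pos_iff_lt]
        refine ENNReal.ofReal_lt_one.2 ?_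
        refine Real.rpow_lt_one_of_one_lt_of_neg (by norm_num) (by linarith)

open scoped ENNReal


private lemma stmt5_meas' (N : ℕ) (α : ℝ) :
    Measurable fun z : EuclideanSpace ℝ (Fin N) => ENNReal.ofReal (‖z‖ ^ (-α)) := by
  fun_prop

private lemma stmt5_translate (N : ℕ) (α R : ℝ) (x : EuclideanSpace ℝ (Fin N)) :
    ∫⁻ y in ball x R, ENNReal.ofReal (‖x - y‖ ^ (-α)) ∂volume
      = ∫⁻ z in ball (0 : EuclideanSpace ℝ (Fin N)) R, ENNReal.ofReal (‖z‖ ^ (-α)) ∂volume := by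
  set g : EuclideanSpace ℝ (Fin N) → ℝ≥0∞ :=
    (ball (0 : EuclideanSpace ℝ (Fin N)) R).indicator fun z => ENNReal.ofReal (‖z‖ ^ (-α))
    with hg
  have hgm : Measurable g := (stmt5_meas' N α).indicator measurableSet_ball
  have h := (Measure.measurePreserving_sub_left
    (volume : Measure (EuclideanSpace ℝ (Fin N))) x).lintegral_comp hgm
  have hfun : ∀ y : EuclideanSpace ℝ (Fin N), g (x - y)
      = (ball x R).indicator (fun y => ENNReal.ofReal (‖x - y‖ ^ (-α))) y := by
    intro y
    rw [hg]
    by_cases hy : y ∈ ball x R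
    · have hm : x - y ∈ ball (0 : EuclideanSpace ℝ (Fin N)) R := by
        rw [mem_ball_zero_iff, norm_sub_rev, ← dist_eq_norm]
        exact mem_ball.1 hy
      rw [indicator_of_mem hm, indicator_of_mem hy]
    · have hm : x - y ∉ ball (0 : EuclideanSpace ℝ (Fin N)) R := by
        rw [mem_ball_zero_iff, norm_sub_rev, ← dist_eq_norm]
        exact fun h' => hy (mem_ball.2 h')
      rw [indicator_of_notMem hm, indicator_of_notMem hy]
  calc ∫⁻ y in ball x R, ENNReal.ofReal (‖x - y‖ ^ (-α)) ∂volume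
      = ∫⁻ y, (ball x R).indicator (fun y => ENNReal.ofReal (‖x - y‖ ^ (-α))) y ∂volume := by
        rw [lintegral_indicator measurableSet_ball]
    _ = ∫⁻ y, g (x - y) ∂volume := by simp_rw [hfun]
    _ = ∫⁻ z, g z ∂volume := h
    _ = ∫⁻ z in ball (0 : EuclideanSpace ℝ (Fin N)) R, ENNReal.ofReal (‖z‖ ^ (-α)) ∂volume := by
        rw [hg, lintegral_indicator measurableSet_ball]

private lemma stmt5_scale (N : ℕ) (hN : 1 ≤ N) (α : ℝ) {R : ℝ} (hR : 0 < R) :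
    ∫⁻ z in ball (0 : EuclideanSpace ℝ (Fin N)) R, ENNReal.ofReal (‖z‖ ^ (-α)) ∂volume
      = ENNReal.ofReal (R ^ ((N : ℝ) - α)) *
        ∫⁻ z in ball (0 : EuclideanSpace ℝ (Fin N)) 1, ENNReal.ofReal (‖z‖ ^ (-α)) ∂volume := by
  set g : EuclideanSpace ℝ (Fin N) → ℝ≥0∞ :=
    (ball (0 : EuclideanSpace ℝ (Fin N)) R).indicator fun z => ENNReal.ofReal (‖z‖ ^ (-α))
    with hg
  have hgm : Measurable g := (stmt5_meas' N α).indicator measurableSet_ball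
  have hfr : Module.finrank ℝ (EuclideanSpace ℝ (Fin N)) = N := finrank_euclideanSpace_fin
  have hRN : (0:ℝ) < R ^ Module.finrank ℝ (EuclideanSpace ℝ (Fin N)) := by positivity
  have hsm : Measurable fun w : EuclideanSpace ℝ (Fin N) => R • w :=
    measurable_id.const_smul R
  have hmap := lintegral_map (μ := (volume : Measure (EuclideanSpace ℝ (Fin N)))) hgm hsm
  rw [Measure.map_addHaar_smul (volume : Measure (EuclideanSpace ℝ (Fin N))) hR.ne'] at hmap
  rw [lintegral_smul_measure] at hmap
  have hcomp : ∀ w : EuclideanSpace ℝ (Fin N), g (R • w)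
      = (ball (0 : EuclideanSpace ℝ (Fin N)) 1).indicator
          (fun w => ENNReal.ofReal (R ^ (-α)) * ENNReal.ofReal (‖w‖ ^ (-α))) w := by
    intro w
    rw [hg]
    have hmem : R • w ∈ ball (0 : EuclideanSpace ℝ (Fin N)) R ↔
        w ∈ ball (0 : EuclideanSpace ℝ (Fin N)) 1 := by
      rw [mem_ball_zero_iff, mem_ball_zero_iff, norm_smul, Real.norm_eq_abs, abs_of_pos hR]
      constructor
      · intro h'; nlinarith [norm_nonneg w]
      · intro h'; nlinarith [norm_nonneg w]
    have hval : ENNReal.ofReal (‖R • w‖ ^ (-α))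
        = ENNReal.ofReal (R ^ (-α)) * ENNReal.ofReal (‖w‖ ^ (-α)) := by
      rw [norm_smul, Real.norm_eq_abs, abs_of_pos hR,
        Real.mul_rpow hR.le (norm_nonneg w), ENNReal.ofReal_mul (by positivity)]
    by_cases hw : w ∈ ball (0 : EuclideanSpace ℝ (Fin N)) 1
    · rw [indicator_of_mem (hmem.2 hw), indicator_of_mem hw, hval]
    · rw [indicator_of_notMem (fun h' => hw (hmem.1 h')), indicator_of_notMem hw]
  simp_rw [hcomp] at hmap
  rw [lintegral_indicator measurableSet_ball] at hmap
  rw [lintegral_indicator measurableSet_ball] at hmap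
  beta_reduce at hmap
  rw [lintegral_const_mul' _ _ ENNReal.ofReal_ne_top] at hmap
  have hone : ENNReal.ofReal (R ^ Module.finrank ℝ (EuclideanSpace ℝ (Fin N))) *
      ENNReal.ofReal |(R ^ Module.finrank ℝ (EuclideanSpace ℝ (Fin N)))⁻¹| = 1 := by
    rw [abs_of_pos (by positivity), ← ENNReal.ofReal_mul (by positivity),
      mul_inv_cancel₀ hRN.ne', ENNReal.ofReal_one]
  calc ∫⁻ z in ball (0 : EuclideanSpace ℝ (Fin N)) R, ENNReal.ofReal (‖z‖ ^ (-α)) ∂volume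
      = (ENNReal.ofReal (R ^ Module.finrank ℝ (EuclideanSpace ℝ (Fin N))) *
          ENNReal.ofReal |(R ^ Module.finrank ℝ (EuclideanSpace ℝ (Fin N)))⁻¹|)
          * ∫⁻ z in ball (0 : EuclideanSpace ℝ (Fin N)) R, ENNReal.ofReal (‖z‖ ^ (-α)) ∂volume := by
        rw [hone, one_mul]
    _ = ENNReal.ofReal (R ^ Module.finrank ℝ (EuclideanSpace ℝ (Fin N))) *
          (ENNReal.ofReal |(R ^ Module.finrank ℝ (EuclideanSpace ℝ (Fin N)))⁻¹|
            * ∫⁻ z in ball (0 : EuclideanSpace ℝ (Fin N)) R, ENNReal.ofReal (‖z‖ ^ (-α)) ∂volume) := by ring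
    _ = ENNReal.ofReal (R ^ Module.finrank ℝ (EuclideanSpace ℝ (Fin N))) *
          (ENNReal.ofReal (R ^ (-α)) *
          ∫⁻ z in ball (0 : EuclideanSpace ℝ (Fin N)) 1,
            ENNReal.ofReal (‖z‖ ^ (-α)) ∂volume) := by rw [← hmap, smul_eq_mul]
    _ = ENNReal.ofReal (R ^ ((N : ℝ) - α)) *
          ∫⁻ z in ball (0 : EuclideanSpace ℝ (Fin N)) 1,
            ENNReal.ofReal (‖z‖ ^ (-α)) ∂volume := by
        rw [← mul_assoc, ← ENNReal.ofReal_mul (by positivity)]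
        congr 2
        rw [← Real.rpow_natCast R (Module.finrank ℝ (EuclideanSpace ℝ (Fin N))),
          ← Real.rpow_add hR, hfr, sub_eq_add_neg]



theorem stmt_5 (N : ℕ) (hN : 1 ≤ N) (α σ : ℝ) (hα0 : 0 < α) (hαN : α < N)
    (hσ : σ > N) :
    ∃ C > 0, ∀ lam : ℝ, 1 ≤ lam → lam ≤ 2 →
      ∀ x : EuclideanSpace ℝ (Fin N), 1 ≤ ‖x‖ →
        ∫⁻ y : EuclideanSpace ℝ (Fin N),
            ENNReal.ofReal (‖x - y‖ ^ (-α) * (lam + ‖y‖ ^ 2) ^ (-σ / 2)) ∂volume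
          ≤ ENNReal.ofReal (C * (lam + ‖x‖ ^ 2) ^ (-α / 2)) := by
  have hN1 : (1:ℝ) ≤ (N:ℝ) := by exact_mod_cast hN
  have hσ0 : 0 < σ := by linarith
  set I1 := ∫⁻ z in ball (0 : EuclideanSpace ℝ (Fin N)) 1,
    ENNReal.ofReal (‖z‖ ^ (-α)) ∂volume with hI1
  set Is := ∫⁻ y : EuclideanSpace ℝ (Fin N),
    ENNReal.ofReal ((1 + ‖y‖) ^ (-σ)) ∂volume with hIs
  have hI1fin : I1 < ⊤ := stmt5_ball_finite N hN α hα0 hαN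
  have hIsfin : Is < ⊤ := by
    exact finite_integral_one_add_norm (E := EuclideanSpace ℝ (Fin N)) (μ := volume)
      (r := σ) (by rwa [finrank_euclideanSpace_fin])
  set K : ℝ := (2:ℝ) ^ (σ - N) * I1.toReal + (2:ℝ) ^ (σ/2) * Is.toReal + 1 with hK
  have htoReal1 : 0 ≤ I1.toReal := ENNReal.toReal_nonneg
  have htoReals : 0 ≤ Is.toReal := ENNReal.toReal_nonneg
  have hK0 : 0 < K := by positivity
  refine ⟨K * (2:ℝ) ^ α * (3:ℝ) ^ (α/2), by positivity, ?_⟩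
  intro lam hlam1 hlam2 x hx
  have hx0 : 0 < ‖x‖ := by linarith
  set R : ℝ := ‖x‖ / 2 with hR
  have hR0 : 0 < R := by rw [hR]; linarith
  have hRhalf : (1:ℝ)/2 ≤ R := by rw [hR]; linarith
  set f : EuclideanSpace ℝ (Fin N) → ℝ≥0∞ :=
    fun y => ENNReal.ofReal (‖x - y‖ ^ (-α) * (lam + ‖y‖ ^ 2) ^ (-σ / 2)) with hf
  -- the key real identity R^(-α) = 2^α * ‖x‖^(-α)
  have h6 : R ^ (-α) = (2:ℝ)^α * ‖x‖ ^ (-α) := by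
    rw [hR, Real.div_rpow (norm_nonneg x) (by norm_num : (0:ℝ) ≤ 2), div_eq_mul_inv,
      ← Real.rpow_neg (by norm_num : (0:ℝ) ≤ 2), neg_neg, mul_comm]
  -- pointwise bound inside the ball
  have hball : ∀ y ∈ ball x R, f y
      ≤ ENNReal.ofReal (R ^ (-σ)) * ENNReal.ofReal (‖x - y‖ ^ (-α)) := by
    intro y hy
    have h4 : ‖x - y‖ < R := by rw [← dist_eq_norm, dist_comm]; exact mem_ball.1 hy
    have h3 : ‖x‖ - ‖y‖ ≤ ‖x - y‖ := norm_sub_norm_le x y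
    have hyn : R ≤ ‖y‖ := by
      have : ‖x‖ = 2 * R := by rw [hR]; ring
      linarith
    have hpow : (lam + ‖y‖ ^ 2) ^ (-σ / 2) ≤ R ^ (-σ) := by
      have h5 : R ^ 2 ≤ lam + ‖y‖ ^ 2 := by nlinarith
      have h6' : ((R^2 : ℝ)) ^ (-σ/2) = R ^ (-σ) := by
        rw [← Real.rpow_natCast R 2, ← Real.rpow_mul hR0.le]
        congr 1
        ring
      calc (lam + ‖y‖ ^ 2) ^ (-σ / 2) ≤ (R^2 : ℝ) ^ (-σ/2) :=
            Real.rpow_le_rpow_of_nonpos (by positivity) h5 (by linarith)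
        _ = R ^ (-σ) := h6'
    have hmul : ‖x - y‖ ^ (-α) * (lam + ‖y‖ ^ 2) ^ (-σ / 2) ≤ R ^ (-σ) * ‖x - y‖ ^ (-α) := by
      rw [mul_comm]
      exact mul_le_mul_of_nonneg_right hpow (Real.rpow_nonneg (norm_nonneg _) _)
    calc f y ≤ ENNReal.ofReal (R ^ (-σ) * ‖x - y‖ ^ (-α)) := ENNReal.ofReal_le_ofReal hmul
      _ = ENNReal.ofReal (R ^ (-σ)) * ENNReal.ofReal (‖x - y‖ ^ (-α)) :=
          ENNReal.ofReal_mul (Real.rpow_nonneg hR0.le _)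
  -- pointwise bound outside the ball
  have hout : ∀ y ∈ (ball x R)ᶜ, f y
      ≤ ENNReal.ofReal ((2:ℝ)^α * ‖x‖^(-α) * (2:ℝ)^(σ/2)) * ENNReal.ofReal ((1 + ‖y‖) ^ (-σ)) := by
    intro y hy
    have h4 : R ≤ ‖x - y‖ := by
      rw [← dist_eq_norm, dist_comm x y]
      exact le_of_not_gt (fun h => hy (mem_ball.mpr h))
    have ha : ‖x - y‖ ^ (-α) ≤ (2:ℝ)^α * ‖x‖ ^ (-α) := by
      have h5 : ‖x - y‖ ^ (-α) ≤ R ^ (-α) :=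
        Real.rpow_le_rpow_of_nonpos hR0 h4 (by linarith)
      linarith [h6]
    have hb : (lam + ‖y‖ ^ 2) ^ (-σ / 2) ≤ (2:ℝ)^(σ/2) * (1 + ‖y‖) ^ (-σ) := by
      have h7 : (lam + ‖y‖ ^ 2) ^ (-σ/2) ≤ ((1:ℝ) + ‖y‖ ^ 2) ^ (-σ/2) :=
        Real.rpow_le_rpow_of_nonpos (by positivity) (by linarith) (by linarith)
      have h8 := rpow_neg_one_add_norm_sq_le (E := EuclideanSpace ℝ (Fin N)) y hσ0
      linarith
    have hcomb : ‖x - y‖ ^ (-α) * (lam + ‖y‖ ^ 2) ^ (-σ / 2)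
        ≤ ((2:ℝ)^α * ‖x‖^(-α) * (2:ℝ)^(σ/2)) * (1 + ‖y‖) ^ (-σ) := by
      have hmm := mul_le_mul ha hb (Real.rpow_nonneg (by positivity) _)
        (by positivity)
      calc ‖x - y‖ ^ (-α) * (lam + ‖y‖ ^ 2) ^ (-σ / 2)
          ≤ ((2:ℝ)^α * ‖x‖^(-α)) * ((2:ℝ)^(σ/2) * (1 + ‖y‖) ^ (-σ)) := hmm
        _ = ((2:ℝ)^α * ‖x‖^(-α) * (2:ℝ)^(σ/2)) * (1 + ‖y‖) ^ (-σ) := by ring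
    calc f y ≤ ENNReal.ofReal (((2:ℝ)^α * ‖x‖^(-α) * (2:ℝ)^(σ/2)) * (1 + ‖y‖) ^ (-σ)) :=
          ENNReal.ofReal_le_ofReal hcomb
      _ = _ := ENNReal.ofReal_mul (by positivity)
  -- the real inequality for the ball part constant
  have hreal : R ^ (-σ) * R ^ ((N:ℝ) - α) ≤ (2:ℝ)^(σ - N) * ((2:ℝ)^α * ‖x‖^(-α)) := by
    have e1 : R ^ (-σ) * R ^ ((N:ℝ) - α) = R ^ ((N:ℝ) - σ) * R ^ (-α) := by
      rw [← Real.rpow_add hR0, ← Real.rpow_add hR0]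
      ring_nf
    have e2 : R ^ ((N:ℝ) - σ) ≤ (2:ℝ)^(σ - N) := by
      have := Real.rpow_le_rpow_of_nonpos (by norm_num : (0:ℝ) < 1/2) hRhalf
        (by linarith : (N:ℝ) - σ ≤ 0)
      have e3 : ((1:ℝ)/2) ^ ((N:ℝ) - σ) = (2:ℝ)^(σ - N) := by
        rw [one_div, ← Real.rpow_neg_one (2:ℝ), ← Real.rpow_mul (by norm_num : (0:ℝ) ≤ 2)]
        ring_nf
      linarith
    rw [e1, h6]
    have : R ^ ((N:ℝ) - σ) * R ^ (-α) ≤ (2:ℝ)^(σ - N) * R ^ (-α) :=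
      mul_le_mul_of_nonneg_right e2 (Real.rpow_nonneg hR0.le _)
    rw [h6] at this
    linarith [this]
  -- part 1 : integral over the ball
  have part1 : ∫⁻ y in ball x R, f y ∂volume
      ≤ ENNReal.ofReal ((2:ℝ)^(σ - N) * ((2:ℝ)^α * ‖x‖^(-α))) * I1 := by
    calc ∫⁻ y in ball x R, f y ∂volume
        ≤ ∫⁻ y in ball x R,
            ENNReal.ofReal (R ^ (-σ)) * ENNReal.ofReal (‖x - y‖ ^ (-α)) ∂volume :=
          setLIntegral_mono' measurableSet_ball hball
      _ = ENNReal.ofReal (R ^ (-σ)) *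
            ∫⁻ y in ball x R, ENNReal.ofReal (‖x - y‖ ^ (-α)) ∂volume :=
          lintegral_const_mul' _ _ ENNReal.ofReal_ne_top
      _ = ENNReal.ofReal (R ^ (-σ)) * (ENNReal.ofReal (R ^ ((N:ℝ) - α)) * I1) := by
          rw [stmt5_translate N α R x, stmt5_scale N hN α hR0]
      _ = ENNReal.ofReal (R ^ (-σ) * R ^ ((N:ℝ) - α)) * I1 := by
          rw [← mul_assoc, ← ENNReal.ofReal_mul (Real.rpow_nonneg hR0.le _)]
      _ ≤ ENNReal.ofReal ((2:ℝ)^(σ - N) * ((2:ℝ)^α * ‖x‖^(-α))) * I1 :=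
          mul_le_mul_left (ENNReal.ofReal_le_ofReal hreal) I1
  -- part 2 : integral over the complement
  have part2 : ∫⁻ y in (ball x R)ᶜ, f y ∂volume
      ≤ ENNReal.ofReal ((2:ℝ)^α * ‖x‖^(-α) * (2:ℝ)^(σ/2)) * Is := by
    calc ∫⁻ y in (ball x R)ᶜ, f y ∂volume
        ≤ ∫⁻ y in (ball x R)ᶜ,
            ENNReal.ofReal ((2:ℝ)^α * ‖x‖^(-α) * (2:ℝ)^(σ/2)) *
              ENNReal.ofReal ((1 + ‖y‖) ^ (-σ)) ∂volume :=
          setLIntegral_mono' measurableSet_ball.compl hout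
      _ ≤ ∫⁻ y, ENNReal.ofReal ((2:ℝ)^α * ‖x‖^(-α) * (2:ℝ)^(σ/2)) *
              ENNReal.ofReal ((1 + ‖y‖) ^ (-σ)) ∂volume :=
          setLIntegral_le_lintegral _ _
      _ = ENNReal.ofReal ((2:ℝ)^α * ‖x‖^(-α) * (2:ℝ)^(σ/2)) * Is :=
          lintegral_const_mul' _ _ ENNReal.ofReal_ne_top
  -- norm comparison
  have hnorm : ‖x‖ ^ (-α) ≤ (3:ℝ)^(α/2) * (lam + ‖x‖ ^ 2) ^ (-α / 2) := by
    have h9 : lam + ‖x‖ ^ 2 ≤ 3 * ‖x‖ ^ 2 := by nlinarith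
    have h10 : ((3:ℝ) * ‖x‖ ^ 2) ^ (-α/2) ≤ (lam + ‖x‖ ^ 2) ^ (-α / 2) :=
      Real.rpow_le_rpow_of_nonpos (by positivity) h9 (by linarith)
    have h11 : ((3:ℝ) * ‖x‖ ^ 2) ^ (-α/2) = (3:ℝ)^(-α/2) * ‖x‖ ^ (-α) := by
      rw [Real.mul_rpow (by norm_num) (by positivity)]
      congr 1
      rw [← Real.rpow_natCast ‖x‖ 2, ← Real.rpow_mul (norm_nonneg x)]
      congr 1
      ring
    have h12 : (3:ℝ)^(α/2) * (3:ℝ)^(-α/2) = 1 := by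
      rw [← Real.rpow_add (by norm_num : (0:ℝ) < 3),
        show α/2 + -α/2 = 0 by ring, Real.rpow_zero]
    calc ‖x‖ ^ (-α) = ((3:ℝ)^(α/2) * (3:ℝ)^(-α/2)) * ‖x‖ ^ (-α) := by rw [h12, one_mul]
      _ = (3:ℝ)^(α/2) * (((3:ℝ) * ‖x‖ ^ 2) ^ (-α/2)) := by rw [mul_assoc, ← h11]
      _ ≤ (3:ℝ)^(α/2) * (lam + ‖x‖ ^ 2) ^ (-α / 2) := by
          exact mul_le_mul_of_nonneg_left h10 (by positivity)
  -- final real inequality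
  have hfinal : (2:ℝ)^(σ - N) * ((2:ℝ)^α * ‖x‖^(-α)) * I1.toReal +
      ((2:ℝ)^α * ‖x‖^(-α) * (2:ℝ)^(σ/2)) * Is.toReal
      ≤ K * (2:ℝ)^α * (3:ℝ)^(α/2) * (lam + ‖x‖ ^ 2) ^ (-α / 2) := by
    have hxa : 0 ≤ ‖x‖ ^ (-α) := Real.rpow_nonneg (norm_nonneg x) _
    have step1 : (2:ℝ)^(σ - N) * ((2:ℝ)^α * ‖x‖^(-α)) * I1.toReal +
        ((2:ℝ)^α * ‖x‖^(-α) * (2:ℝ)^(σ/2)) * Is.toReal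
        = (2:ℝ)^α * ‖x‖^(-α) * ((2:ℝ)^(σ - N) * I1.toReal + (2:ℝ)^(σ/2) * Is.toReal) := by
      ring
    have step2 : (2:ℝ)^α * ‖x‖^(-α) * ((2:ℝ)^(σ - N) * I1.toReal + (2:ℝ)^(σ/2) * Is.toReal)
        ≤ (2:ℝ)^α * ‖x‖^(-α) * K := by
      apply mul_le_mul_of_nonneg_left _ (by positivity)
      rw [hK]; linarith
    have step3 : (2:ℝ)^α * ‖x‖^(-α) * K
        ≤ (2:ℝ)^α * ((3:ℝ)^(α/2) * (lam + ‖x‖ ^ 2) ^ (-α / 2)) * K := by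
      apply mul_le_mul_of_nonneg_right _ hK0.le
      exact mul_le_mul_of_nonneg_left hnorm (by positivity)
    calc _ = (2:ℝ)^α * ‖x‖^(-α) * ((2:ℝ)^(σ - N) * I1.toReal + (2:ℝ)^(σ/2) * Is.toReal) := step1
      _ ≤ (2:ℝ)^α * ‖x‖^(-α) * K := step2
      _ ≤ (2:ℝ)^α * ((3:ℝ)^(α/2) * (lam + ‖x‖ ^ 2) ^ (-α / 2)) * K := step3
      _ = K * (2:ℝ)^α * (3:ℝ)^(α/2) * (lam + ‖x‖ ^ 2) ^ (-α / 2) := by ring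
  -- combine
  calc ∫⁻ y, f y ∂volume
      = (∫⁻ y in ball x R, f y ∂volume) + ∫⁻ y in (ball x R)ᶜ, f y ∂volume :=
        (lintegral_add_compl f measurableSet_ball).symm
    _ ≤ ENNReal.ofReal ((2:ℝ)^(σ - N) * ((2:ℝ)^α * ‖x‖^(-α))) * I1 +
        ENNReal.ofReal ((2:ℝ)^α * ‖x‖^(-α) * (2:ℝ)^(σ/2)) * Is := add_le_add part1 part2
    _ = ENNReal.ofReal ((2:ℝ)^(σ - N) * ((2:ℝ)^α * ‖x‖^(-α)) * I1.toReal) +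
        ENNReal.ofReal (((2:ℝ)^α * ‖x‖^(-α) * (2:ℝ)^(σ/2)) * Is.toReal) := by
        have e1 : ENNReal.ofReal ((2:ℝ)^(σ - N) * ((2:ℝ)^α * ‖x‖^(-α)) * I1.toReal)
            = ENNReal.ofReal ((2:ℝ)^(σ - N) * ((2:ℝ)^α * ‖x‖^(-α))) * I1 := by
          rw [ENNReal.ofReal_mul (by positivity), ENNReal.ofReal_toReal hI1fin.ne]
        have e2 : ENNReal.ofReal (((2:ℝ)^α * ‖x‖^(-α) * (2:ℝ)^(σ/2)) * Is.toReal)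
            = ENNReal.ofReal ((2:ℝ)^α * ‖x‖^(-α) * (2:ℝ)^(σ/2)) * Is := by
          rw [ENNReal.ofReal_mul (by positivity), ENNReal.ofReal_toReal hIsfin.ne]
        rw [e1, e2]
    _ = ENNReal.ofReal ((2:ℝ)^(σ - N) * ((2:ℝ)^α * ‖x‖^(-α)) * I1.toReal +
        ((2:ℝ)^α * ‖x‖^(-α) * (2:ℝ)^(σ/2)) * Is.toReal) := by
        rw [← ENNReal.ofReal_add (by positivity) (by positivity)]
    _ ≤ ENNReal.ofReal (K * (2:ℝ)^α * (3:ℝ)^(α/2) * (lam + ‖x‖ ^ 2) ^ (-α / 2)) :=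
        ENNReal.ofReal_le_ofReal hfinal
end

section
/- Let N > 2, β ∈ (0, N−2), and choose a > 0 small enough that N − 2 − β − a(a+1)/2 > 0. With w(x,t) = (1+t)^{-a} + 1 + |x|² and u = w^{-β/2}, there exists C > 0 such that ∂²u/∂t² − Δ_x u ≥ C w^{-(β+2)/2} on ℝ^N × (0,∞). -/
open MeasureTheory Set

/-- The Laplacian of `f : ℝ^N → ℝ` as the sum of the second partial derivatives. -/
noncomputable def lap {N : ℕ} (f : EuclideanSpace ℝ (Fin N) → ℝ)
    (x : EuclideanSpace ℝ (Fin N)) : ℝ :=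
  ∑ i : Fin N,
    fderiv ℝ (fun y => fderiv ℝ f y (EuclideanSpace.single i 1)) x (EuclideanSpace.single i 1)

lemma spatial {N : ℕ} (β c : ℝ) (hc : 0 < c) (x : EuclideanSpace ℝ (Fin N)) :
    lap (fun y => (c + ‖y‖ ^ 2) ^ (-β / 2)) x
      = β * (β + 2) * ‖x‖ ^ 2 * (c + ‖x‖ ^ 2) ^ (-β / 2 - 2)
        - β * N * (c + ‖x‖ ^ 2) ^ (-β / 2 - 1) := by
  have hw : ∀ y : EuclideanSpace ℝ (Fin N), (0:ℝ) < c + ‖y‖ ^ 2 := fun y => by positivity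
  have hD1 : ∀ y : EuclideanSpace ℝ (Fin N),
      HasFDerivAt (fun y : EuclideanSpace ℝ (Fin N) => (c + ‖y‖ ^ 2) ^ (-β / 2))
        (((-β / 2) * (c + ‖y‖ ^ 2) ^ (-β / 2 - 1)) • (2 • (innerSL ℝ y))) y := by
    intro y
    have h0 : HasFDerivAt (fun y : EuclideanSpace ℝ (Fin N) => ‖y‖ ^ 2) (2 • innerSL ℝ y) y :=
      (hasStrictFDerivAt_norm_sq y).hasFDerivAt
    exact (h0.const_add c).rpow_const (Or.inl (hw y).ne')
  have hfd : ∀ i : Fin N, (fun y : EuclideanSpace ℝ (Fin N) =>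
      fderiv ℝ (fun y : EuclideanSpace ℝ (Fin N) => (c + ‖y‖ ^ 2) ^ (-β / 2)) y
        (EuclideanSpace.single i 1))
      = fun y : EuclideanSpace ℝ (Fin N) => (-β) * (c + ‖y‖ ^ 2) ^ (-β / 2 - 1) * y i := by
    intro i
    funext y
    rw [(hD1 y).fderiv]
    simp [EuclideanSpace.inner_single_right]
    ring
  have hval : ∀ i : Fin N,
      fderiv ℝ (fun y : EuclideanSpace ℝ (Fin N) =>
        (-β) * (c + ‖y‖ ^ 2) ^ (-β / 2 - 1) * y i) x (EuclideanSpace.single i 1)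
      = (-β) * (c + ‖x‖ ^ 2) ^ (-β / 2 - 1)
        + β * (β + 2) * (c + ‖x‖ ^ 2) ^ (-β / 2 - 2) * (x i) ^ 2 := by
    intro i
    have hA : HasFDerivAt (fun y : EuclideanSpace ℝ (Fin N) =>
        (-β) * (c + ‖y‖ ^ 2) ^ (-β / 2 - 1))
        ((-β) • (((-β / 2 - 1) * (c + ‖x‖ ^ 2) ^ (-β / 2 - 1 - 1)) • (2 • innerSL ℝ x))) x := by
      have h0 : HasFDerivAt (fun y : EuclideanSpace ℝ (Fin N) => ‖y‖ ^ 2) (2 • innerSL ℝ x) x :=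
        (hasStrictFDerivAt_norm_sq x).hasFDerivAt
      exact (((h0.const_add c)).rpow_const (Or.inl (hw x).ne')).const_mul (-β)
    have hB : HasFDerivAt (fun y : EuclideanSpace ℝ (Fin N) => y i)
        (EuclideanSpace.proj i : EuclideanSpace ℝ (Fin N) →L[ℝ] ℝ) x :=
      (EuclideanSpace.proj i : EuclideanSpace ℝ (Fin N) →L[ℝ] ℝ).hasFDerivAt
    have hAB : HasFDerivAt (fun y : EuclideanSpace ℝ (Fin N) =>
        (-β) * (c + ‖y‖ ^ 2) ^ (-β / 2 - 1) * y i) _ x := hA.mul hB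
    rw [hAB.fderiv]
    simp [EuclideanSpace.inner_single_right, EuclideanSpace.single_apply]
    ring
  unfold lap
  have hsum : ∑ i : Fin N, (x i) ^ 2 = ‖x‖ ^ 2 := by
    rw [EuclideanSpace.norm_eq, Real.sq_sqrt (by positivity)]
    simp [Real.norm_eq_abs, sq_abs]
  calc ∑ i : Fin N, fderiv ℝ (fun y : EuclideanSpace ℝ (Fin N) =>
        fderiv ℝ (fun y : EuclideanSpace ℝ (Fin N) => (c + ‖y‖ ^ 2) ^ (-β / 2)) y
          (EuclideanSpace.single i 1)) x (EuclideanSpace.single i 1)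
      = ∑ i : Fin N, ((-β) * (c + ‖x‖ ^ 2) ^ (-β / 2 - 1)
          + β * (β + 2) * (c + ‖x‖ ^ 2) ^ (-β / 2 - 2) * (x i) ^ 2) := by
        refine Finset.sum_congr rfl fun i _ => ?_
        rw [hfd i, hval i]
    _ = β * (β + 2) * ‖x‖ ^ 2 * (c + ‖x‖ ^ 2) ^ (-β / 2 - 2)
        - β * N * (c + ‖x‖ ^ 2) ^ (-β / 2 - 1) := by
        rw [Finset.sum_add_distrib, Finset.sum_const, ← Finset.mul_sum, hsum]
        simp [Finset.card_univ]
        ring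

lemma timeDeriv (a β c : ℝ) (hc : 0 < c) (t : ℝ) (ht : -1 < t) :
    iteratedDeriv 2 (fun s : ℝ => ((1 + s) ^ (-a) + c) ^ (-β / 2)) t
      = -(a * (a + 1) * (β / 2)) * (1 + t) ^ (-a - 1 - 1) * ((1 + t) ^ (-a) + c) ^ (-β / 2 - 1)
        + a ^ 2 * (β / 2) * (β / 2 + 1) * ((1 + t) ^ (-a - 1)) ^ 2
          * ((1 + t) ^ (-a) + c) ^ (-β / 2 - 1 - 1) := by
  set G : ℝ → ℝ := fun s =>
    1 * (-a) * (1 + s) ^ (-a - 1) * (-β / 2) * ((1 + s) ^ (-a) + c) ^ (-β / 2 - 1) with hG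
  have hW : ∀ s : ℝ, 0 < 1 + s → (0:ℝ) < (1 + s) ^ (-a) + c := fun s hs => by
    have := Real.rpow_pos_of_pos hs (-a); linarith
  have key : ∀ s ∈ Ioi (-1:ℝ),
      HasDerivAt (fun s : ℝ => ((1 + s) ^ (-a) + c) ^ (-β / 2)) (G s) s := by
    intro s hs
    have hs0 : (0:ℝ) < 1 + s := by simpa using by linarith [mem_Ioi.1 hs]
    have h1 : HasDerivAt (fun s : ℝ => 1 + s) 1 s := by
      simpa using (hasDerivAt_id s).const_add 1
    have h2 := h1.rpow_const (p := -a) (Or.inl hs0.ne')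
    have h3 := h2.add_const c
    have h4 := h3.rpow_const (p := -β / 2) (Or.inl (hW s hs0).ne')
    simpa [hG] using h4
  have hmem : Ioi (-1:ℝ) ∈ nhds t := isOpen_Ioi.mem_nhds ht
  have heq : deriv (fun s : ℝ => ((1 + s) ^ (-a) + c) ^ (-β / 2)) =ᶠ[nhds t] G := by
    filter_upwards [hmem] with s hs
    exact (key s hs).deriv
  have h2eq : iteratedDeriv 2 (fun s : ℝ => ((1 + s) ^ (-a) + c) ^ (-β / 2)) t
      = deriv G t := by
    rw [show (2:ℕ) = 1 + 1 from rfl, iteratedDeriv_succ, iteratedDeriv_one]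
    exact heq.deriv_eq
  rw [h2eq]
  -- compute deriv G t
  have ht0 : (0:ℝ) < 1 + t := by linarith
  have h1 : HasDerivAt (fun s : ℝ => 1 + s) 1 t := by
    simpa using (hasDerivAt_id t).const_add 1
  have hP : HasDerivAt (fun s : ℝ => 1 * (-a) * (1 + s) ^ (-a - 1) * (-β / 2))
      ((1 * (-a)) * (1 * (-a - 1) * (1 + t) ^ (-a - 1 - 1)) * (-β / 2)) t := by
    exact ((h1.rpow_const (p := -a - 1) (Or.inl ht0.ne')).const_mul (1 * (-a))).mul_const
      (-β / 2)
  have hQ : HasDerivAt (fun s : ℝ => ((1 + s) ^ (-a) + c) ^ (-β / 2 - 1))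
      ((1 * (-a) * (1 + t) ^ (-a - 1)) * (-β / 2 - 1)
        * ((1 + t) ^ (-a) + c) ^ (-β / 2 - 1 - 1)) t := by
    exact ((h1.rpow_const (p := -a) (Or.inl ht0.ne')).add_const c).rpow_const
      (Or.inl (hW t ht0).ne')
  have hGd := hP.mul hQ
  have : deriv G t = (1 * (-a)) * (1 * (-a - 1) * (1 + t) ^ (-a - 1 - 1)) * (-β / 2)
        * ((1 + t) ^ (-a) + c) ^ (-β / 2 - 1)
      + 1 * (-a) * (1 + t) ^ (-a - 1) * (-β / 2)
        * ((1 * (-a) * (1 + t) ^ (-a - 1)) * (-β / 2 - 1)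
          * ((1 + t) ^ (-a) + c) ^ (-β / 2 - 1 - 1)) := hGd.deriv
  rw [this]; ring

lemma arith (n β a p q x2 W1 W2 W : ℝ) (hβ0 : 0 < β) (ha : 0 < a)
    (hC : 0 < n - 2 - β - a * (a + 1) / 2)
    (hp : 0 < p) (hp1 : p ≤ 1) (hq : 0 ≤ q)
    (hx2 : 0 ≤ x2) (hxW : x2 ≤ W)
    (hW1 : 0 < W1) (hW2 : 0 < W2) (hmul : W2 * W = W1) :
    -(a * (a + 1) * (β / 2)) * p * W1 + a ^ 2 * (β / 2) * (β / 2 + 1) * q * W2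
      - (β * (β + 2) * x2 * W2 - β * n * W1)
      ≥ β * (n - 2 - β - a * (a + 1) / 2) * W1 := by
  have hk : (0:ℝ) ≤ a * (a + 1) * (β / 2) := by positivity
  have hA : -(a * (a + 1) * (β / 2)) * p * W1 ≥ -(a * (a + 1) * (β / 2)) * W1 := by
    have h : p * W1 ≤ W1 := by nlinarith
    nlinarith [mul_nonneg hk (sub_nonneg.mpr h)]
  have hB : (0:ℝ) ≤ a ^ 2 * (β / 2) * (β / 2 + 1) * q * W2 := by positivity
  have hb : (0:ℝ) ≤ β * (β + 2) := by positivity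
  have hCle : β * (β + 2) * x2 * W2 ≤ β * (β + 2) * W1 := by
    have h : x2 * W2 ≤ W1 := by nlinarith
    nlinarith [mul_nonneg hb (sub_nonneg.mpr h)]
  nlinarith

theorem stmt_9 (N : ℕ) (hN : 2 < N) (β a : ℝ) (hβ0 : 0 < β) (hβN : β < N - 2)
    (ha : 0 < a) (ha' : N - 2 - β - a * (a + 1) / 2 > 0) :
    ∃ C > 0, ∀ (x : EuclideanSpace ℝ (Fin N)) (t : ℝ), 0 < t →
      iteratedDeriv 2 (fun s : ℝ => ((1 + s) ^ (-a) + 1 + ‖x‖ ^ 2) ^ (-β / 2)) t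
        - lap (fun y => ((1 + t) ^ (-a) + 1 + ‖y‖ ^ 2) ^ (-β / 2)) x
        ≥ C * ((1 + t) ^ (-a) + 1 + ‖x‖ ^ 2) ^ (-(β + 2) / 2) := by
  refine ⟨β * (N - 2 - β - a * (a + 1) / 2), mul_pos hβ0 ha', ?_⟩
  intro x t ht
  have ht0 : (0:ℝ) < 1 + t := by linarith
  have hrp : (0:ℝ) < (1 + t) ^ (-a) := Real.rpow_pos_of_pos ht0 (-a)
  have hx2 : (0:ℝ) ≤ ‖x‖ ^ 2 := sq_nonneg _
  have htime := timeDeriv a β (1 + ‖x‖ ^ 2) (by positivity) t (by linarith)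
  have hspat := spatial (N := N) β ((1 + t) ^ (-a) + 1) (by linarith) x
  have hfun : (fun s : ℝ => ((1 + s) ^ (-a) + 1 + ‖x‖ ^ 2) ^ (-β / 2))
      = fun s : ℝ => ((1 + s) ^ (-a) + (1 + ‖x‖ ^ 2)) ^ (-β / 2) := by
    funext s; rw [add_assoc]
  have hWr : ((1 + t) ^ (-a) + 1 + ‖x‖ ^ 2 : ℝ) = (1 + t) ^ (-a) + (1 + ‖x‖ ^ 2) :=
    add_assoc _ _ _
  have he2 : (-β / 2 - 1 - 1 : ℝ) = -β / 2 - 2 := by ring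
  have hexp : (-(β + 2) / 2 : ℝ) = -β / 2 - 1 := by ring
  rw [he2] at htime
  rw [hWr] at hspat
  rw [hfun, htime, hspat, hWr, hexp]
  have hW : (0:ℝ) < (1 + t) ^ (-a) + (1 + ‖x‖ ^ 2) := by nlinarith
  exact arith N β a ((1 + t) ^ (-a - 1 - 1)) (((1 + t) ^ (-a - 1)) ^ 2) (‖x‖ ^ 2)
    (((1 + t) ^ (-a) + (1 + ‖x‖ ^ 2)) ^ (-β / 2 - 1))
    (((1 + t) ^ (-a) + (1 + ‖x‖ ^ 2)) ^ (-β / 2 - 2))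
    ((1 + t) ^ (-a) + (1 + ‖x‖ ^ 2)) hβ0 ha ha'
    (Real.rpow_pos_of_pos ht0 _)
    (Real.rpow_le_one_of_one_le_of_nonpos (by linarith) (by linarith))
    (by positivity) hx2 (by nlinarith)
    (Real.rpow_pos_of_pos hW _) (Real.rpow_pos_of_pos hW _)
    (by rw [← Real.rpow_add_one hW.ne' (-β / 2 - 2),
          show (-β / 2 - 2) + (1:ℝ) = -β / 2 - 1 from by ring])
end

section
/- Let N ≥ 1 and let γ > 0 with pγ > N for some p > 0. Suppose K : (0,∞) → (0,∞) is continuous, K(|x|) ∈ L¹_loc(ℝ^N), and K is bounded on [1,∞). For v(x) = 1+|x|², q ≥ 1, and M > 0 sufficiently large with k even, the function u(x,t) = e^{-Mt} v(x)^{-γ/2} satisfies ∂^k u/∂t^k + (-Δ)^m u ≥ (K ∗ u^p) u^q pointwise on ℝ^N × (0,∞), where (K∗u^p)(x,t) = ∫ K(|x−y|) u(y,t)^p dy. -/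
open MeasureTheory Set

/-- The `m`-fold iterate of the negative Laplacian `(-Δ)^m`. -/
noncomputable def negLapIter {N : ℕ} (m : ℕ) (f : EuclideanSpace ℝ (Fin N) → ℝ) :
    EuclideanSpace ℝ (Fin N) → ℝ :=
  (fun g x => -(lap g x))^[m] f

variable {γ : ℝ} {N : ℕ}


/-- Functions spanned by `s ↦ (1+s)^(-γ/2 - j)`, `j : ℕ`. -/
inductive VRep (γ : ℝ) : (ℝ → ℝ) → Prop
  | base (j : ℕ) : VRep γ (fun s => (1 + s) ^ (-γ / 2 - (j : ℝ)))
  | smul (r : ℝ) {F : ℝ → ℝ} : VRep γ F → VRep γ (fun s => r * F s)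
  | add {F G : ℝ → ℝ} : VRep γ F → VRep γ G → VRep γ (fun s => F s + G s)

theorem VRep.bound {γ : ℝ} {F : ℝ → ℝ} (h : VRep γ F) :
    ∃ C : ℝ, 0 ≤ C ∧ ∀ s : ℝ, 0 ≤ s → |F s| ≤ C * (1 + s) ^ (-γ / 2) := by
  induction h with
  | base j =>
    refine ⟨1, zero_le_one, fun s hs => ?_⟩
    have h1 : (0:ℝ) < 1 + s := by linarith
    rw [abs_of_nonneg (Real.rpow_nonneg h1.le _), one_mul]
    have : (0:ℝ) ≤ (j:ℝ) := Nat.cast_nonneg j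
    exact Real.rpow_le_rpow_of_exponent_le (by linarith) (by linarith)
  | smul r h ih =>
    obtain ⟨C, hC0, hC⟩ := ih
    exact ⟨|r| * C, by positivity, fun s hs => by
      rw [abs_mul, mul_assoc]; exact mul_le_mul_of_nonneg_left (hC s hs) (abs_nonneg r)⟩
  | add hF hG ihF ihG =>
    obtain ⟨C, hC0, hC⟩ := ihF; obtain ⟨D, hD0, hD⟩ := ihG
    refine ⟨C + D, by positivity, fun s hs => ?_⟩
    calc |_| ≤ _ := abs_add_le _ _
    _ ≤ C * (1+s) ^ (-γ/2) + D * (1+s) ^ (-γ/2) := add_le_add (hC s hs) (hD s hs)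
    _ = _ := by ring

/-- derivative representation -/
theorem VRep.deriv {γ : ℝ} {F : ℝ → ℝ} (h : VRep γ F) :
    ∃ F₁ : ℝ → ℝ, VRep γ F₁ ∧ ∀ s : ℝ, -1 < s → HasDerivAt F (F₁ s) s := by
  induction h with
  | base j =>
    refine ⟨fun s => (-γ/2 - j) * (1 + s) ^ (-γ/2 - ((j:ℝ)+1)), ?_, fun s hs => ?_⟩
    · have := (VRep.base (γ := γ) (j+1)).smul (-γ/2 - j)
      convert this using 3 with s; push_cast; ring_nf
    · have h1 : (0:ℝ) < 1 + s := by linarith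
      have hin : HasDerivAt (fun u : ℝ => 1 + u) 1 s := (hasDerivAt_id s).const_add 1
      have hd := hin.rpow_const (p := -γ/2 - j) (Or.inl (ne_of_gt h1))
      have he : -γ/2 - ((j:ℝ)+1) = -γ/2 - (j:ℝ) - 1 := by ring
      convert hd using 1
      rw [he]; ring
  | smul r h ih =>
    obtain ⟨F₁, hF₁, hd⟩ := ih
    exact ⟨fun s => r * F₁ s, hF₁.smul r, fun s hs => (hd s hs).const_mul r⟩
  | add hF hG ihF ihG =>
    obtain ⟨F₁, hF₁, hdF⟩ := ihF; obtain ⟨G₁, hG₁, hdG⟩ := ihG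
    exact ⟨fun s => F₁ s + G₁ s, hF₁.add hG₁, fun s hs => (hdF s hs).add (hdG s hs)⟩

/-- All data needed to compute one application of `-Δ` on `F(‖x‖²)`. -/
theorem VRep.lapData (c : ℝ) {F : ℝ → ℝ} (h : VRep γ F) :
    ∃ F₁ F₂ G : ℝ → ℝ, VRep γ F₁ ∧ VRep γ G ∧
      (∀ s : ℝ, -1 < s → HasDerivAt F (F₁ s) s) ∧
      (∀ s : ℝ, -1 < s → HasDerivAt F₁ (F₂ s) s) ∧
      (∀ s : ℝ, -1 < s → G s = -(4 * s * F₂ s + 2 * c * F₁ s)) := by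
  induction h with
  | base j =>
    set a : ℝ := -γ / 2 - (j : ℝ) with ha
    refine ⟨fun s => a * (1 + s) ^ (-γ / 2 - ((j+1 : ℕ) : ℝ)),
      fun s => (a * (a-1)) * (1 + s) ^ (-γ / 2 - ((j+2 : ℕ) : ℝ)),
      fun s => (-(4*a*(a-1)) - 2*c*a) * (1 + s) ^ (-γ / 2 - ((j+1 : ℕ) : ℝ))
        + (4*a*(a-1)) * (1 + s) ^ (-γ / 2 - ((j+2 : ℕ) : ℝ)),
      .smul a (.base (j+1)), .add (.smul _ (.base (j+1))) (.smul _ (.base (j+2))),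
      fun s hs => ?_, fun s hs => ?_, fun s hs => ?_⟩
    · have h1 : (0:ℝ) < 1 + s := by linarith
      have hin : HasDerivAt (fun u : ℝ => 1 + u) 1 s := (hasDerivAt_id s).const_add 1
      have hd := hin.rpow_const (p := a) (Or.inl (ne_of_gt h1))
      have he : -γ/2 - ((j+1:ℕ):ℝ) = a - 1 := by push_cast [ha]; ring
      rw [he]; convert hd using 1; ring
    · have h1 : (0:ℝ) < 1 + s := by linarith
      have hin : HasDerivAt (fun u : ℝ => 1 + u) 1 s := (hasDerivAt_id s).const_add 1
      have hd := (hin.rpow_const (p := -γ/2 - ((j+1:ℕ):ℝ)) (Or.inl (ne_of_gt h1))).const_mul a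
      have he : -γ/2 - ((j+2:ℕ):ℝ) = (-γ/2 - ((j+1:ℕ):ℝ)) - 1 := by push_cast; ring
      rw [he]; refine hd.congr_deriv ?_
      have : -γ/2 - ((j+1:ℕ):ℝ) = a - 1 := by push_cast [ha]; ring
      rw [this]; ring
    · have h1 : (0:ℝ) < 1 + s := by linarith
      have key : (1+s) ^ (-γ/2 - ((j+1:ℕ):ℝ))
          = (1+s) ^ (-γ/2 - ((j+2:ℕ):ℝ)) * (1+s) := by
        rw [← Real.rpow_add_one (ne_of_gt h1)]
        congr 1; push_cast; ring
      simp only [key]; ring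
  | smul r h ih =>
    obtain ⟨F₁, F₂, G, hF₁, hG, hd1, hd2, hid⟩ := ih
    refine ⟨fun s => r * F₁ s, fun s => r * F₂ s, fun s => r * G s,
      .smul r hF₁, .smul r hG, fun s hs => (hd1 s hs).const_mul r,
      fun s hs => (hd2 s hs).const_mul r, fun s hs => ?_⟩
    simp only [hid s hs]; ring
  | add hF hG ihF ihG =>
    obtain ⟨F₁, F₂, G1, hF₁, hG1, hd1, hd2, hid⟩ := ihF
    obtain ⟨H₁, H₂, G2, hH₁, hG2, he1, he2, hid'⟩ := ihG
    refine ⟨fun s => F₁ s + H₁ s, fun s => F₂ s + H₂ s, fun s => G1 s + G2 s,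
      .add hF₁ hH₁, .add hG1 hG2, fun s hs => (hd1 s hs).add (he1 s hs),
      fun s hs => (hd2 s hs).add (he2 s hs), fun s hs => ?_⟩
    simp only [hid s hs, hid' s hs]; ring
variable {N : ℕ}

lemma hasFDerivAt_nsq (x : EuclideanSpace ℝ (Fin N)) :
    HasFDerivAt (fun y : EuclideanSpace ℝ (Fin N) => ‖y‖ ^ 2) (2 • (innerSL ℝ x)) x :=
  (hasStrictFDerivAt_norm_sq x).hasFDerivAt

lemma nsq_nonneg (x : EuclideanSpace ℝ (Fin N)) : (-1 : ℝ) < ‖x‖ ^ 2 := by nlinarith [sq_nonneg ‖x‖]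

lemma fderiv_comp_nsq {F F₁ : ℝ → ℝ}
    (hd : ∀ s : ℝ, -1 < s → HasDerivAt F (F₁ s) s) (y : EuclideanSpace ℝ (Fin N)) :
    HasFDerivAt (fun z : EuclideanSpace ℝ (Fin N) => F (‖z‖ ^ 2))
      ((F₁ (‖y‖ ^ 2)) • (2 • (innerSL ℝ y))) y :=
  HasDerivAt.comp_hasFDerivAt y (hd _ (nsq_nonneg y)) (hasFDerivAt_nsq y)

lemma fderiv_comp_nsq_apply {F F₁ : ℝ → ℝ}
    (hd : ∀ s : ℝ, -1 < s → HasDerivAt F (F₁ s) s) (y : EuclideanSpace ℝ (Fin N)) (i : Fin N) :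
    fderiv ℝ (fun z : EuclideanSpace ℝ (Fin N) => F (‖z‖ ^ 2)) y (EuclideanSpace.single i 1)
      = F₁ (‖y‖ ^ 2) * (2 * y i) := by
  rw [(fderiv_comp_nsq hd y).fderiv]
  simp [real_inner_comm, EuclideanSpace.inner_single_left, EuclideanSpace.inner_single_right]

lemma lap_comp_nsq {F F₁ F₂ : ℝ → ℝ}
    (hd1 : ∀ s : ℝ, -1 < s → HasDerivAt F (F₁ s) s)
    (hd2 : ∀ s : ℝ, -1 < s → HasDerivAt F₁ (F₂ s) s) (x : EuclideanSpace ℝ (Fin N)) :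
    lap (fun z : EuclideanSpace ℝ (Fin N) => F (‖z‖ ^ 2)) x
      = 4 * ‖x‖ ^ 2 * F₂ (‖x‖ ^ 2) + 2 * N * F₁ (‖x‖ ^ 2) := by
  have hterm : ∀ i : Fin N,
      fderiv ℝ (fun y => fderiv ℝ (fun z : EuclideanSpace ℝ (Fin N) => F (‖z‖ ^ 2)) y
          (EuclideanSpace.single i 1)) x (EuclideanSpace.single i 1)
        = F₂ (‖x‖ ^ 2) * (2 * x i) * (2 * x i) + F₁ (‖x‖ ^ 2) * 2 := by
    intro i
    have heq : (fun y => fderiv ℝ (fun z : EuclideanSpace ℝ (Fin N) => F (‖z‖ ^ 2)) y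
          (EuclideanSpace.single i 1))
        = fun y => F₁ (‖y‖ ^ 2) * (2 * y i) := funext fun y => fderiv_comp_nsq_apply hd1 y i
    rw [heq]
    have h1 : HasFDerivAt (fun y : EuclideanSpace ℝ (Fin N) => F₁ (‖y‖ ^ 2))
        ((F₂ (‖x‖ ^ 2)) • (2 • (innerSL ℝ x))) x := fderiv_comp_nsq hd2 x
    have h2 : HasFDerivAt (fun y : EuclideanSpace ℝ (Fin N) => 2 * y i)
        ((2 : ℝ) • (EuclideanSpace.proj i : EuclideanSpace ℝ (Fin N) →L[ℝ] ℝ)) x := by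
      have hp := ((EuclideanSpace.proj i : EuclideanSpace ℝ (Fin N) →L[ℝ] ℝ)).hasFDerivAt (x := x)
      exact hp.const_mul (2:ℝ)
    rw [HasFDerivAt.fderiv (f := fun y : EuclideanSpace ℝ (Fin N) => F₁ (‖y‖ ^ 2) * (2 * y i)) (h1.mul h2)]
    simp [real_inner_comm, EuclideanSpace.inner_single_left, EuclideanSpace.inner_single_right]
    ring
  have hsum : ∑ i, (x i) ^ 2 = ‖x‖ ^ 2 := by
    rw [EuclideanSpace.norm_eq, Real.sq_sqrt (by positivity)]
    simp [sq_abs]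
  rw [lap]
  calc ∑ i : Fin N, _ = ∑ i : Fin N,
      (F₂ (‖x‖ ^ 2) * (2 * x i) * (2 * x i) + F₁ (‖x‖ ^ 2) * 2) := by
        exact Finset.sum_congr rfl fun i _ => hterm i
  _ = (∑ i, 4 * F₂ (‖x‖ ^ 2) * (x i) ^ 2) + N * (F₁ (‖x‖ ^ 2) * 2) := by
      rw [Finset.sum_add_distrib, Finset.sum_const, Finset.card_univ, Fintype.card_fin,
        nsmul_eq_mul]
      congr 1
      exact Finset.sum_congr rfl fun i _ => by ring
  _ = 4 * (∑ i, (x i) ^ 2) * F₂ (‖x‖ ^ 2) + 2 * N * F₁ (‖x‖ ^ 2) := by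
      have h4 : (∑ i, 4 * F₂ (‖x‖ ^ 2) * (x i) ^ 2) = 4 * (∑ i, (x i) ^ 2) * F₂ (‖x‖ ^ 2) := by
        rw [Finset.mul_sum, Finset.sum_mul]
        exact Finset.sum_congr rfl fun i _ => by ring
      rw [h4]; ring
  _ = _ := by rw [hsum]
variable {N : ℕ}

lemma fderiv_const_mul' {E : Type*} [NormedAddCommGroup E] [NormedSpace ℝ E]
    (c : ℝ) (g : E → ℝ) (x : E) :
    fderiv ℝ (fun y => c * g y) x = c • fderiv ℝ g x := by
  rcases eq_or_ne c 0 with rfl | hc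
  · simp
  by_cases hg : DifferentiableAt ℝ g x
  · exact fderiv_const_mul hg c
  · rw [fderiv_zero_of_not_differentiableAt hg, fderiv_zero_of_not_differentiableAt, smul_zero]
    intro hcg
    have : DifferentiableAt ℝ (fun y => c⁻¹ * (c * g y)) x := hcg.const_mul _
    refine hg (this.congr_of_eventuallyEq (Filter.Eventually.of_forall fun y => ?_))
    field_simp
lemma lap_const_mul (c : ℝ) (g : EuclideanSpace ℝ (Fin N) → ℝ) (x : EuclideanSpace ℝ (Fin N)) :
    lap (fun y => c * g y) x = c * lap g x := by
  unfold lap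
  rw [Finset.mul_sum]
  refine Finset.sum_congr rfl fun i _ => ?_
  have h1 : (fun y => fderiv ℝ (fun z => c * g z) y (EuclideanSpace.single i 1))
      = fun y => c * fderiv ℝ g y (EuclideanSpace.single i 1) := by
    funext y; rw [fderiv_const_mul' c g y]; simp
  rw [h1, fderiv_const_mul' c _ x]; simp

lemma negLapIter_const_mul (m : ℕ) (c : ℝ) (g : EuclideanSpace ℝ (Fin N) → ℝ) :
    negLapIter m (fun y => c * g y) = fun x => c * negLapIter m g x := by
  induction m with
  | zero => simp [negLapIter]
  | succ n ih =>
    unfold negLapIter at *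
    rw [Function.iterate_succ_apply', Function.iterate_succ_apply', ih]
    funext x
    simp only [lap_const_mul c]
    ring

lemma iteratedDeriv_exp_neg_mul (M : ℝ) :
    ∀ (k : ℕ) (C t : ℝ),
      iteratedDeriv k (fun s : ℝ => Real.exp (-(M * s)) * C) t
        = (-M) ^ k * (Real.exp (-(M * t)) * C) := by
  intro k
  induction k with
  | zero => intro C t; simp
  | succ n ih =>
    intro C t
    rw [iteratedDeriv_succ']
    have hder : deriv (fun s : ℝ => Real.exp (-(M * s)) * C)
        = fun s : ℝ => Real.exp (-(M * s)) * (-M * C) := by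
      funext s
      have h : HasDerivAt (fun s : ℝ => Real.exp (-(M * s)) * C)
          (Real.exp (-(M * s)) * -M * C) s := by
        have h0 := (((hasDerivAt_id s).const_mul M).neg.exp).mul_const C
        simp only [id] at h0
        refine h0.congr_deriv ?_
        simp only [Pi.neg_apply]
        ring
      rw [h.deriv]; ring
    rw [hder, ih (-M * C) t]
    ring

lemma conv_bound (N : ℕ) (hN : 1 ≤ N) (p γ : ℝ) (hp : 0 < p) (hγ : 0 < γ) (hpγ : p * γ > N)
    (K : ℝ → ℝ) (hKpos : ∀ r > 0, 0 < K r)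
    (hKloc : LocallyIntegrable (fun x : EuclideanSpace ℝ (Fin N) => K ‖x‖) volume)
    (hKbdd : ∃ M : ℝ, ∀ r ≥ (1 : ℝ), K r ≤ M) :
    ∃ CI : ℝ, 0 ≤ CI ∧ ∀ x : EuclideanSpace ℝ (Fin N),
      (∫ y : EuclideanSpace ℝ (Fin N), K ‖x - y‖ * (1 + ‖y‖ ^ 2) ^ (-(p * γ) / 2) ∂volume)
        ∈ Icc (0 : ℝ) CI := by
  obtain ⟨MK, hMK⟩ := hKbdd
  set MK' := max MK 0 with hMK'
  haveI : Nontrivial (EuclideanSpace ℝ (Fin N)) := by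
    refine ⟨0, EuclideanSpace.single ⟨0, hN⟩ 1, fun h => ?_⟩
    have := congrArg (fun v : EuclideanSpace ℝ (Fin N) => v ⟨0, hN⟩) h.symm
    simp [EuclideanSpace.single_apply] at this
  haveI : NullSingletonClass (volume : Measure (EuclideanSpace ℝ (Fin N))) := inferInstance
  -- integrability of the weight
  have hNlt : (Module.finrank ℝ (EuclideanSpace ℝ (Fin N)) : ℝ) < p * γ := by
    rw [finrank_euclideanSpace_fin]; exact hpγ
  have hw : Integrable (fun y : EuclideanSpace ℝ (Fin N) => (1 + ‖y‖ ^ 2) ^ (-(p * γ) / 2))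
      volume := integrable_rpow_neg_one_add_norm_sq hNlt
  -- integrability of K near the origin
  have hK1 : IntegrableOn (fun z : EuclideanSpace ℝ (Fin N) => K ‖z‖)
      (Metric.closedBall 0 1) volume :=
    hKloc.integrableOn_isCompact (isCompact_closedBall 0 1)
  set C1 : ℝ := ∫ z in Metric.closedBall (0 : EuclideanSpace ℝ (Fin N)) 1, K ‖z‖ ∂volume with hC1
  set C2 : ℝ := ∫ y : EuclideanSpace ℝ (Fin N), (1 + ‖y‖ ^ 2) ^ (-(p * γ) / 2) ∂volume with hC2
  have hC1nn : 0 ≤ C1 := by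
    refine setIntegral_nonneg_ae (measurableSet_closedBall)
      ((ae_iff.2 ?_ : ∀ᵐ z : EuclideanSpace ℝ (Fin N), z ≠ 0).mono ?_)
    · simpa using measure_singleton (0 : EuclideanSpace ℝ (Fin N))
    · intro z hz _
      have : (0:ℝ) < ‖z‖ := norm_pos_iff.2 hz
      exact (hKpos _ this).le
  have hC2nn : 0 ≤ C2 := integral_nonneg fun y => Real.rpow_nonneg (by positivity) _
  refine ⟨C1 + MK' * C2, by positivity, fun x => ?_⟩
  have hxne : ∀ᵐ y : EuclideanSpace ℝ (Fin N), y ≠ x := by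
    refine ae_iff.2 ?_
    simpa using measure_singleton x
  have hfnn : 0 ≤ᵐ[volume] fun y : EuclideanSpace ℝ (Fin N) =>
      K ‖x - y‖ * (1 + ‖y‖ ^ 2) ^ (-(p * γ) / 2) := by
    refine hxne.mono fun y hy => ?_
    have h0 : (0:ℝ) < ‖x - y‖ := by
      rw [norm_pos_iff, sub_ne_zero]; exact fun h => hy h.symm
    exact mul_nonneg (hKpos _ h0).le (Real.rpow_nonneg (by positivity) _)
  -- dominating function
  set g : EuclideanSpace ℝ (Fin N) → ℝ := fun y =>
    (Metric.closedBall x 1).indicator (fun y => K ‖x - y‖) y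
      + MK' * (1 + ‖y‖ ^ 2) ^ (-(p * γ) / 2) with hg
  have hmp : MeasurePreserving (fun y : EuclideanSpace ℝ (Fin N) => x - y) volume volume :=
    Measure.measurePreserving_sub_left volume x
  have hemb : MeasurableEmbedding (fun y : EuclideanSpace ℝ (Fin N) => x - y) :=
    (MeasurableEquiv.subLeft x).measurableEmbedding
  have hpre : (fun y : EuclideanSpace ℝ (Fin N) => x - y) ⁻¹' (Metric.closedBall 0 1)
      = Metric.closedBall x 1 := by
    ext y
    simp only [Set.mem_preimage, Metric.mem_closedBall, dist_eq_norm, sub_zero]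
    rw [norm_sub_rev]
  have hgint1 : IntegrableOn (fun y : EuclideanSpace ℝ (Fin N) => K ‖x - y‖)
      (Metric.closedBall x 1) volume := by
    have h2 := (hmp.integrableOn_comp_preimage hemb
      (s := Metric.closedBall (0 : EuclideanSpace ℝ (Fin N)) 1)
      (f := fun z : EuclideanSpace ℝ (Fin N) => K ‖z‖)).2 hK1
    rwa [hpre] at h2
  have hgint : Integrable g volume := by
    refine Integrable.add ?_ (hw.const_mul MK')
    rw [integrable_indicator_iff measurableSet_closedBall]
    exact hgint1
  have hle : (fun y : EuclideanSpace ℝ (Fin N) =>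
      K ‖x - y‖ * (1 + ‖y‖ ^ 2) ^ (-(p * γ) / 2)) ≤ᵐ[volume] g := by
    refine hxne.mono fun y hy => ?_
    have h0 : (0:ℝ) < ‖x - y‖ := by
      rw [norm_pos_iff, sub_ne_zero]; exact fun h => hy h.symm
    have hwy : (0:ℝ) ≤ (1 + ‖y‖ ^ 2) ^ (-(p * γ) / 2) := Real.rpow_nonneg (by positivity) _
    have hwy1 : (1 + ‖y‖ ^ 2) ^ (-(p * γ) / 2) ≤ 1 := by
      apply Real.rpow_le_one_of_one_le_of_nonpos (by nlinarith [sq_nonneg ‖y‖])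
      have : (0:ℝ) < p * γ := by positivity
      linarith
    by_cases hball : y ∈ Metric.closedBall x 1
    · have : K ‖x - y‖ * (1 + ‖y‖ ^ 2) ^ (-(p * γ) / 2) ≤ K ‖x - y‖ := by
        nlinarith [hKpos _ h0]
      simp only [hg, Set.indicator_of_mem hball]
      have h2 : 0 ≤ MK' * (1 + ‖y‖ ^ 2) ^ (-(p * γ) / 2) :=
        mul_nonneg (le_max_right _ _) hwy
      linarith
    · have hdist : (1:ℝ) ≤ ‖x - y‖ := by
        simp only [Metric.mem_closedBall, not_le, dist_comm] at hball
        rw [← dist_eq_norm]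
        exact hball.le
      have : K ‖x - y‖ ≤ MK' := le_trans (hMK _ hdist) (le_max_left _ _)
      simp only [hg, Set.indicator_of_notMem hball]
      have := mul_le_mul_of_nonneg_right this hwy
      linarith [hKpos _ h0]
  have hmono := integral_mono_of_nonneg hfnn hgint hle
  constructor
  · exact integral_nonneg_of_ae hfnn
  · refine hmono.trans ?_
    rw [hg, integral_add ((integrable_indicator_iff measurableSet_closedBall).2 hgint1)
      (hw.const_mul MK'), integral_indicator measurableSet_closedBall, MeasureTheory.integral_const_mul]
    have htrans : ∫ y in Metric.closedBall x 1, K ‖x - y‖ ∂volume = C1 := by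
      have := hmp.setIntegral_preimage_emb hemb
        (fun z : EuclideanSpace ℝ (Fin N) => K ‖z‖)
        (Metric.closedBall (0 : EuclideanSpace ℝ (Fin N)) 1)
      rw [hpre] at this
      exact this
    rw [htrans]

theorem negLapIter_rep {N : ℕ} (γ : ℝ) (m : ℕ) {F : ℝ → ℝ} (h : VRep γ F) :
    ∃ G : ℝ → ℝ, VRep γ G ∧
      negLapIter (N := N) m (fun y => F (‖y‖ ^ 2)) = fun x => G (‖x‖ ^ 2) := by
  induction m with
  | zero => exact ⟨F, h, rfl⟩
  | succ n ih =>
    obtain ⟨G, hG, hEq⟩ := ih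
    obtain ⟨F₁, F₂, G', hF₁, hG', hd1, hd2, hid⟩ := hG.lapData (N : ℝ)
    refine ⟨G', hG', ?_⟩
    show (fun g x => -(lap g x))^[n+1] _ = _
    rw [Function.iterate_succ_apply']
    have hE : (fun g (x : EuclideanSpace ℝ (Fin N)) => -(lap g x))^[n]
        (fun y => F (‖y‖ ^ 2)) = fun x => G (‖x‖ ^ 2) := hEq
    rw [hE]
    funext x
    show -(lap (fun x : EuclideanSpace ℝ (Fin N) => G (‖x‖ ^ 2)) x) = G' (‖x‖ ^ 2)
    rw [lap_comp_nsq hd1 hd2 x, hid _ (nsq_nonneg x)]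

theorem stmt_14 (N k m : ℕ) (hN : 1 ≤ N) (hk : 1 ≤ k) (hkeven : Even k) (hm : 1 ≤ m)
    (p q γ : ℝ) (hp : 0 < p) (hq : 1 ≤ q) (hγ : 0 < γ) (hpγ : p * γ > N)
    (K : ℝ → ℝ) (hKcont : ContinuousOn K (Set.Ioi 0)) (hKpos : ∀ r > 0, 0 < K r)
    (hKloc : LocallyIntegrable (fun x : EuclideanSpace ℝ (Fin N) => K ‖x‖) volume)
    (hKbdd : ∃ M : ℝ, ∀ r ≥ (1 : ℝ), K r ≤ M) :
    ∃ M₀ > (1 : ℝ), ∀ M ≥ M₀, ∀ (x : EuclideanSpace ℝ (Fin N)) (t : ℝ), 0 < t →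
      iteratedDeriv k (fun s : ℝ => Real.exp (-(M * s)) * (1 + ‖x‖ ^ 2) ^ (-γ / 2)) t
        + negLapIter m (fun y => Real.exp (-(M * t)) * (1 + ‖y‖ ^ 2) ^ (-γ / 2)) x
        ≥ (∫ y : EuclideanSpace ℝ (Fin N),
              K ‖x - y‖ * (Real.exp (-(M * t)) * (1 + ‖y‖ ^ 2) ^ (-γ / 2)) ^ p ∂volume)
            * (Real.exp (-(M * t)) * (1 + ‖x‖ ^ 2) ^ (-γ / 2)) ^ q := by
  -- spatial representation
  have hF₀ : VRep γ (fun s : ℝ => (1 + s) ^ (-γ / 2)) := by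
    have h0 := VRep.base (γ := γ) 0
    simpa using h0
  obtain ⟨G, hG, hGeq⟩ := negLapIter_rep (N := N) γ m hF₀
  obtain ⟨CL, hCL0, hCL⟩ := hG.bound
  obtain ⟨CI, hCI0, hCI⟩ := conv_bound N hN p γ hp hγ hpγ K hKpos hKloc hKbdd
  refine ⟨CI + CL + 2, by linarith, fun M hM x t ht => ?_⟩
  have hM1 : (1 : ℝ) ≤ M := by linarith
  have hMk : CI + CL + 2 ≤ M ^ k := le_trans hM (le_self_pow₀ hM1 (by omega))
  set E := Real.exp (-(M * t)) with hE
  set Cx : ℝ := (1 + ‖x‖ ^ 2) ^ (-γ / 2) with hCx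
  have hE0 : 0 < E := Real.exp_pos _
  have hE1 : E ≤ 1 := by
    rw [hE, Real.exp_le_one_iff]
    nlinarith
  have hCx0 : 0 < Cx := Real.rpow_pos_of_pos (by positivity) _
  have hCx1 : Cx ≤ 1 := by
    apply Real.rpow_le_one_of_one_le_of_nonpos (by nlinarith [sq_nonneg ‖x‖])
    linarith
  -- time derivative term
  have hT : iteratedDeriv k (fun s : ℝ => Real.exp (-(M * s)) * (1 + ‖x‖ ^ 2) ^ (-γ / 2)) t
      = M ^ k * (E * Cx) := by
    rw [iteratedDeriv_exp_neg_mul M k ((1 + ‖x‖ ^ 2) ^ (-γ / 2)) t, hkeven.neg_pow]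
  -- spatial term
  have hS : negLapIter m (fun y => Real.exp (-(M * t)) * (1 + ‖y‖ ^ 2) ^ (-γ / 2)) x
      = E * G (‖x‖ ^ 2) := by
    have h1 := congrFun (negLapIter_const_mul (N := N) m E
      (fun y => (1 + ‖y‖ ^ 2) ^ (-γ / 2))) x
    rw [← hE, h1]
    have h2 : negLapIter (N := N) m (fun y => (1 + ‖y‖ ^ 2) ^ (-γ / 2))
        = fun x => G (‖x‖ ^ 2) := hGeq
    rw [h2]
  -- convolution term
  have hint : (∫ y : EuclideanSpace ℝ (Fin N),
        K ‖x - y‖ * (Real.exp (-(M * t)) * (1 + ‖y‖ ^ 2) ^ (-γ / 2)) ^ p ∂volume)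
      = E ^ p * ∫ y : EuclideanSpace ℝ (Fin N),
          K ‖x - y‖ * (1 + ‖y‖ ^ 2) ^ (-(p * γ) / 2) ∂volume := by
    rw [← MeasureTheory.integral_const_mul]
    congr 1
    funext y
    have hb : (0:ℝ) ≤ 1 + ‖y‖ ^ 2 := by positivity
    rw [Real.mul_rpow (Real.exp_nonneg _) (Real.rpow_nonneg hb _), ← hE,
      ← Real.rpow_mul hb]
    have : -γ / 2 * p = -(p * γ) / 2 := by ring
    rw [this]
    ring
  rw [hT, hS, hint]
  obtain ⟨hJ0, hJle⟩ := hCI x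
  set J : ℝ := ∫ y : EuclideanSpace ℝ (Fin N),
      K ‖x - y‖ * (1 + ‖y‖ ^ 2) ^ (-(p * γ) / 2) ∂volume with hJ
  -- bound the right-hand side
  have hECx0 : 0 < E * Cx := mul_pos hE0 hCx0
  have hECx1 : E * Cx ≤ 1 := by
    calc E * Cx ≤ 1 * 1 := mul_le_mul hE1 hCx1 hCx0.le zero_le_one
    _ = 1 := by ring
  have hpow : (E * Cx) ^ q ≤ E * Cx := by
    have := Real.rpow_le_rpow_of_exponent_ge hECx0 hECx1 hq
    rwa [Real.rpow_one] at this
  have hpow0 : (0:ℝ) ≤ (E * Cx) ^ q := Real.rpow_nonneg hECx0.le _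
  have hEp1 : E ^ p ≤ 1 := Real.rpow_le_one hE0.le hE1 hp.le
  have hEp0 : (0:ℝ) ≤ E ^ p := Real.rpow_nonneg hE0.le _
  have hR : E ^ p * J * (E * Cx) ^ q ≤ CI * (E * Cx) := by
    calc E ^ p * J * (E * Cx) ^ q ≤ (1 * CI) * (E * Cx) := by
          apply mul_le_mul (mul_le_mul hEp1 hJle hJ0 zero_le_one) hpow hpow0
          positivity
    _ = CI * (E * Cx) := by ring
  -- bound the G term
  have hGb := hCL (‖x‖ ^ 2) (by positivity)
  rw [← hCx] at hGb
  have hGlow : -(CL * Cx) ≤ G (‖x‖ ^ 2) := by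
    have := abs_le.1 hGb
    linarith [this.1]
  have hS' : -(CL * (E * Cx)) ≤ E * G (‖x‖ ^ 2) := by
    have h := mul_le_mul_of_nonneg_left hGlow hE0.le
    calc -(CL * (E * Cx)) = E * -(CL * Cx) := by ring
    _ ≤ E * G (‖x‖ ^ 2) := h
  have hTm : CI * (E * Cx) + CL * (E * Cx) ≤ M ^ k * (E * Cx) := by
    have hsum : CI + CL ≤ M ^ k := by linarith
    calc CI * (E * Cx) + CL * (E * Cx) = (CI + CL) * (E * Cx) := by ring
    _ ≤ M ^ k * (E * Cx) := mul_le_mul_of_nonneg_right hsum hECx0.le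
  linarith
end
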